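/- arXiv:2102.08031 — 4 statements merged into one kernel-verified Lean document; each statement's English description precedes it below -/
import Mathlib

section
/- Let n ∈ ℕ and let f, g : (ℂ∖ℝ)^n → ℂ be holomorphic functions, each satisfying the symmetry formula and the variable non-dependence property. If f(z) = g(z) for all z ∈ ℂ^{+n}, then f(z) = g(z) for all z ∈ (ℂ∖ℝ)^n. (Equivalently: a holomorphic function on (ℂ∖ℝ)^n satisfying the symmetry formula and the variable non-dependence property is uniquely determined by its values in ℂ^{+n}.) -/
open Complex MeasureTheory Finset Filter Topology

/-- The kernel `K_n`. -/
noncomputable def kernelK (n : ℕ) (z : Fin n → ℂ) (t : Fin n → ℝ) : ℂ :=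
  Complex.I * ((2 / (2 * Complex.I) ^ n) *
      ∏ ℓ : Fin n, (((t ℓ : ℂ) - z ℓ)⁻¹ - ((t ℓ : ℂ) + Complex.I)⁻¹) -
    (1 / (2 * Complex.I) ^ n) *
      ∏ ℓ : Fin n, (((t ℓ : ℂ) - Complex.I)⁻¹ - ((t ℓ : ℂ) + Complex.I)⁻¹))

/-- The selective conjugation map `Ψ_B`. -/
noncomputable def PsiMap (n : ℕ) (B : Finset (Fin n)) (z w : Fin n → ℂ) : Fin n → ℂ :=
  fun j => if j ∈ B then (starRingEnd ℂ) (w j) else z j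

/-- The poly cut-plane `(ℂ∖ℝ)^n`. -/
def polyCutPlane (n : ℕ) : Set (Fin n → ℂ) := {z | ∀ j, (z j).im ≠ 0}

/-- The poly upper half-plane `ℂ^{+n}`. -/
def upperPoly (n : ℕ) : Set (Fin n → ℂ) := {z | ∀ j, 0 < (z j).im}

/-- The growth condition for a positive Borel measure on `ℝ^n`. -/
def GrowthCondition (n : ℕ) (μ : Measure (Fin n → ℝ)) : Prop :=
  ∫⁻ t, ENNReal.ofReal (∏ ℓ : Fin n, (1 + (t ℓ) ^ 2)⁻¹) ∂μ < ⊤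

/-- The factors `N_{-1}, N_0, N_1`. -/
noncomputable def Nfun (ρ : ℤ) (z : ℂ) (t : ℝ) : ℂ :=
  if ρ = -1 then (1 / (2 * Complex.I)) * (((t : ℂ) - z)⁻¹ - ((t : ℂ) - Complex.I)⁻¹)
  else if ρ = 0 then
    (1 / (2 * Complex.I)) * (((t : ℂ) - Complex.I)⁻¹ - ((t : ℂ) + Complex.I)⁻¹)
  else (1 / (2 * Complex.I)) * (((t : ℂ) + Complex.I)⁻¹ - ((t : ℂ) - (starRingEnd ℂ) z)⁻¹)

/-- The Nevanlinna condition for a positive Borel measure on `ℝ^n`: the sum runs over all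
`ρ ∈ {-1,0,1}^n` containing both `-1` and `1` (encoded via `Fin 3`, `k ↦ k - 1`). -/
def NevanlinnaCondition (n : ℕ) (μ : Measure (Fin n → ℝ)) : Prop :=
  ∀ z : Fin n → ℂ, (∀ j, 0 < (z j).im) →
    ∑ ρ ∈ Finset.univ.filter
        (fun ρ : Fin n → Fin 3 => (∃ j, ρ j = 0) ∧ (∃ j, ρ j = 2)),
      ∫ t, ∏ j : Fin n, Nfun ((ρ j : ℤ) - 1) (z j) (t j) ∂μ = 0

/-- The symmetry formula for a function on the poly cut-plane. -/
def SymmetryFormula (n : ℕ) (f : (Fin n → ℂ) → ℂ) : Prop :=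
  ∀ z ∈ polyCutPlane n,
    f z = ∑ B ∈ Finset.univ.powerset.filter (fun B : Finset (Fin n) => B ≠ ∅),
      (-1 : ℂ) ^ (B.card + 1) *
        (starRingEnd ℂ) (f (PsiMap n B (fun _ => Complex.I) z))

/-- The variable non-dependence property. -/
def VarNonDep (n : ℕ) (f : (Fin n → ℂ) → ℂ) : Prop :=
  ∀ z ∈ polyCutPlane n, ∀ w ∈ polyCutPlane n,
    (∃ j, (z j).im < 0) → (∀ j, (z j).im < 0 ↔ (w j).im < 0) →
    (∀ j, (z j).im < 0 → z j = w j) → f z = f w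

/-- The upper Stoltz domain with centre `0` and angle `θ`. -/
def upperStoltz (θ : ℝ) : Set ℂ :=
  {w | 0 < w.im ∧ θ ≤ Complex.arg w ∧ Complex.arg w ≤ Real.pi - θ}

/-- The lower Stoltz domain with centre `0` and angle `θ`. -/
def lowerStoltz (θ : ℝ) : Set ℂ :=
  {w | (starRingEnd ℂ) w ∈ upperStoltz θ}

/-- The filter of `|w| → ∞` within a set `S ⊆ ℂ`. -/
noncomputable def stoltzFilter (S : Set ℂ) : Filter ℂ :=
  (Filter.comap (fun w : ℂ => ‖w‖) Filter.atTop) ⊓ Filter.principal S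

/-!
Put `h := f - g`; it satisfies both properties and vanishes on `ℂ^{+n}`. Fix `z` with a
nonempty set `T` of coordinates in the lower half-plane. The point `Ψ_B(i𝟙, z)` lies in the
lower half-plane exactly at the coordinates of `B \ T`, where it equals `conj z_j`, so by
variable non-dependence `h(Ψ_B(i𝟙, z)) = h(Ψ_{B \ T}(i𝟙, z))` (both sides vanish when
`B ⊆ T`). In the symmetry formula at `z` the terms therefore cancel in pairs
`B ↔ B △ {j}` for a fixed `j ∈ T`, so `h z = 0`.
-/

theorem Finset.sum_neg_one_pow_card_mul_filter {α R : Type*} [Fintype α] [DecidableEq α]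
    [CommRing R] (p : α → Prop) [DecidablePred p] {j : α} (hj : ¬ p j) (F : Finset α → R) :
    ∑ B : Finset α, (-1 : R) ^ #B * F (B.filter p) = 0 := by
  let toggle : Finset α → Finset α := fun B => if j ∈ B then B.erase j else insert j B
  have filter_toggle (B : Finset α) : (toggle B).filter p = B.filter p := by
    by_cases hB : j ∈ B <;> simp [toggle, hB, filter_erase, filter_insert, hj]
  have card_toggle (B : Finset α) : (-1 : R) ^ #(toggle B) = -(-1) ^ #B := by
    by_cases hB : j ∈ B
    · rw [← card_erase_add_one hB, pow_succ]; simp [toggle, hB]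
    · simp [toggle, hB, card_insert_of_notMem hB, pow_succ]
  refine sum_ninvolution toggle (fun B => ?_) (fun B _ => ?_) (fun _ => mem_univ _)
    (fun B => ?_)
  · rw [card_toggle, filter_toggle]; ring
  · intro hfixed
    by_cases hB : j ∈ B <;> simpa [toggle, hB] using congrArg (j ∈ ·) hfixed
  · by_cases hB : j ∈ B <;> simp [toggle, hB]

section

variable {n : ℕ}

theorem SymmetryFormula.sub {f g : (Fin n → ℂ) → ℂ} (hf : SymmetryFormula n f)
    (hg : SymmetryFormula n g) : SymmetryFormula n (f - g) := by
  intro z hz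
  simp only [Pi.sub_apply, map_sub, mul_sub, sum_sub_distrib, ← hf z hz, ← hg z hz]

theorem VarNonDep.sub {f g : (Fin n → ℂ) → ℂ} (hf : VarNonDep n f) (hg : VarNonDep n g) :
    VarNonDep n (f - g) := by
  intro z hz w hw hneg hsign hagree
  simp only [Pi.sub_apply, hf z hz w hw hneg hsign hagree, hg z hz w hw hneg hsign hagree]

theorem mem_upperPoly_of_forall_not_im_neg {z : Fin n → ℂ} (hz : z ∈ polyCutPlane n)
    (hpos : ∀ j, ¬ (z j).im < 0) : z ∈ upperPoly n :=
  fun j => (hz j).lt_or_gt.resolve_left (hpos j)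

theorem psiMap_I_mem_polyCutPlane {z : Fin n → ℂ} (hz : z ∈ polyCutPlane n)
    (B : Finset (Fin n)) : PsiMap n B (fun _ => I) z ∈ polyCutPlane n := by
  intro j
  by_cases hj : j ∈ B <;> simp [PsiMap, hj, hz j]

theorem im_psiMap_I_neg_iff (z : Fin n → ℂ) (B : Finset (Fin n)) (j : Fin n) :
    (PsiMap n B (fun _ => I) z j).im < 0 ↔ j ∈ B ∧ 0 < (z j).im := by
  by_cases hj : j ∈ B <;> simp [PsiMap, hj]

theorem VarNonDep.apply_psiMap_I_filter {h : (Fin n → ℂ) → ℂ} (hdep : VarNonDep n h)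
    (hup : ∀ w ∈ upperPoly n, h w = 0) {z : Fin n → ℂ} (hz : z ∈ polyCutPlane n)
    (B : Finset (Fin n)) :
    h (PsiMap n B (fun _ => I) z) =
      h (PsiMap n (B.filter fun j => 0 < (z j).im) (fun _ => I) z) := by
  have hsign (j : Fin n) : (PsiMap n B (fun _ => I) z j).im < 0 ↔
      (PsiMap n (B.filter fun j => 0 < (z j).im) (fun _ => I) z j).im < 0 := by
    simp only [im_psiMap_I_neg_iff, mem_filter]
    tauto
  by_cases hneg : ∃ j, (PsiMap n B (fun _ => I) z j).im < 0
  · refine hdep _ (psiMap_I_mem_polyCutPlane hz B) _ (psiMap_I_mem_polyCutPlane hz _) hneg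
      hsign fun j hj => ?_
    obtain ⟨hjB, hjz⟩ := (im_psiMap_I_neg_iff z B j).1 hj
    simp [PsiMap, hjB, hjz]
  · push Not at hneg
    rw [hup _ (mem_upperPoly_of_forall_not_im_neg (psiMap_I_mem_polyCutPlane hz B)
        fun j => (hneg j).not_gt),
      hup _ (mem_upperPoly_of_forall_not_im_neg (psiMap_I_mem_polyCutPlane hz _)
        fun j hj => (hneg j).not_gt ((hsign j).2 hj))]

theorem eq_zero_of_symmetryFormula_of_varNonDep {h : (Fin n → ℂ) → ℂ}
    (hsym : SymmetryFormula n h) (hdep : VarNonDep n h) (hup : ∀ w ∈ upperPoly n, h w = 0) :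
    ∀ z ∈ polyCutPlane n, h z = 0 := by
  intro z hz
  by_cases hneg : ∃ j, (z j).im < 0
  swap
  · exact hup z (mem_upperPoly_of_forall_not_im_neg hz fun j hj => hneg ⟨j, hj⟩)
  obtain ⟨j, hj⟩ := hneg
  have hempty : PsiMap n ∅ (fun _ => I) z ∈ upperPoly n := fun k => by simp [PsiMap]
  rw [hsym z hz, powerset_univ,
    sum_filter_of_ne (p := fun B => B ≠ ∅) fun B _ hB hB0 => hB (by simp [hB0, hup _ hempty])]
  calc ∑ B : Finset (Fin n), (-1 : ℂ) ^ (#B + 1) *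
          (starRingEnd ℂ) (h (PsiMap n B (fun _ => I) z))
      = -∑ B : Finset (Fin n), (-1 : ℂ) ^ #B *
          (starRingEnd ℂ) (h (PsiMap n (B.filter fun k => 0 < (z k).im) (fun _ => I) z)) := by
        rw [← sum_neg_distrib]
        refine sum_congr rfl fun B _ => ?_
        rw [hdep.apply_psiMap_I_filter hup hz B]
        ring
    _ = 0 := by
        rw [sum_neg_one_pow_card_mul_filter (fun k => 0 < (z k).im) hj.not_gt
          fun S => (starRingEnd ℂ) (h (PsiMap n S (fun _ => I) z)), neg_zero]

end

theorem symmetry_uniqueness_general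
    (n : ℕ) (f g : (Fin n → ℂ) → ℂ)
    (hfSym : SymmetryFormula n f) (hgSym : SymmetryFormula n g)
    (hfDep : VarNonDep n f) (hgDep : VarNonDep n g)
    (heq : ∀ z ∈ upperPoly n, f z = g z) :
    ∀ z ∈ polyCutPlane n, f z = g z := by
  intro z hz
  have hvanish := eq_zero_of_symmetryFormula_of_varNonDep (hfSym.sub hgSym) (hfDep.sub hgDep)
    (fun w hw => sub_eq_zero.2 (heq w hw)) z hz
  exact sub_eq_zero.1 hvanish

/-- Proposition 3.2: a holomorphic function on the poly cut-plane satisfying the symmetry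
formula and the variable non-dependence property is uniquely determined by its values on
the poly upper half-plane. -/
theorem symmetry_uniqueness
    (n : ℕ) (f g : (Fin n → ℂ) → ℂ)
    (hf : DifferentiableOn ℂ f (polyCutPlane n))
    (hg : DifferentiableOn ℂ g (polyCutPlane n))
    (hfSym : SymmetryFormula n f) (hgSym : SymmetryFormula n g)
    (hfDep : VarNonDep n f) (hgDep : VarNonDep n g)
    (heq : ∀ z ∈ upperPoly n, f z = g z) :
    ∀ z ∈ polyCutPlane n, f z = g z :=
  symmetry_uniqueness_general n f g hfSym hgSym hfDep hgDep heq
end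

section
/- Let n ≥ 2, let a ∈ ℝ, and let μ be a positive Borel measure on ℝ^n satisfying the growth condition and the Nevanlinna condition. Define f : (ℂ∖ℝ)^n → ℂ by f(z) := a + π^{−n} ∫_{ℝ^n} K_n(z,t) dμ(t) (the symmetric extension of a Herglotz-Nevanlinna function with b = 0). Then f satisfies the variable non-dependence property: if z ∈ (ℂ∖ℝ)^n is such that Im z_j < 0 for some index j ∈ {1,…,n}, then the value f(z) does not depend on the components of z that lie in ℂ^+. -/
/-!
Write `M(z, ·) = (t - z)⁻¹ - (t + i)⁻¹` for the factors of the kernel, so that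
`K_n(z, t) = 2i ∏ₗ M(zₗ, tₗ)/(2i) - i ∏ₗ N₀(tₗ)`, and `M(z, ·)/(2i)` is `N₋₁(z, ·) + N₀` when
`Im z > 0` and `-N₁(z̄, ·)` when `Im z < 0`. Expanding the product writes `∫ K_n(z, ·) dμ` as a
combination of the integrals of `∏ⱼ N_{ρⱼ}(vⱼ, tⱼ)`, where `v ∈ ℂ^{+n}` is `z` with its lower
coordinates conjugated. If some `Im zⱼ < 0`, every `ρ` that occurs equals `1` at the lower
coordinates, so it is either mixed (it also contains `-1`) or it is `0` at every upper coordinate,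
where `N₀` does not see `zⱼ`.

The mixed integrals vanish one by one. In a single variable `u = vⱼ`, the part of the Nevanlinna
sum with `ρ` fixed on a set of coordinates splits into a holomorphic part (`ρⱼ = -1`), a constant
(`ρⱼ = 0`) and an antiholomorphic part (`ρⱼ = 1`); the outer two vanish at `u = i` because
`N₋₁(i, ·) = N₁(i, ·) = 0`, and a holomorphic function that is antiholomorphic on `ℂ⁺` is constant,
so all three parts vanish. Fixing `ρ` one coordinate at a time isolates each mixed term.
-/

open Complex MeasureTheory Finset Filter Topology

open scoped ComplexConjugate

@[simp] lemma Nfun_neg_one (z : ℂ) (s : ℝ) :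
    Nfun (-1) z s = (1 / (2 * I)) * (((s : ℂ) - z)⁻¹ - ((s : ℂ) - I)⁻¹) := by
  simp [Nfun]

@[simp] lemma Nfun_zero (z : ℂ) (s : ℝ) :
    Nfun 0 z s = (1 / (2 * I)) * (((s : ℂ) - I)⁻¹ - ((s : ℂ) + I)⁻¹) := by
  simp [Nfun]

lemma Nfun_I {e : ℤ} (he : e ≠ 0) (s : ℝ) : Nfun e I s = 0 := by
  simp [Nfun, he]

lemma Nfun_zero_eq_Nfun_zero (z w : ℂ) (s : ℝ) : Nfun 0 z s = Nfun 0 w s := by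
  simp

lemma conj_Nfun (k : Fin 3) (z : ℂ) (s : ℝ) :
    conj (Nfun ((k : ℤ) - 1) z s) = Nfun ((k.rev : ℤ) - 1) z s := by
  fin_cases k <;> simp [Nfun, Fin.rev, map_ofNat] <;> ring

section Bounds

lemma ofReal_sub_ne_zero {z : ℂ} (hz : z.im ≠ 0) (s : ℝ) : (s : ℂ) - z ≠ 0 := by
  intro h
  exact hz (by simpa using (congrArg Complex.im h).symm)

lemma one_add_sq_le_mul_norm_ofReal_sub_sq {z : ℂ} (hz : z.im ≠ 0) (s : ℝ) :
    1 + s ^ 2 ≤ (2 + (1 + 2 * z.re ^ 2) / z.im ^ 2) * ‖(s : ℂ) - z‖ ^ 2 := by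
  have hnorm : ‖(s : ℂ) - z‖ ^ 2 = (s - z.re) ^ 2 + z.im ^ 2 := by
    rw [← Complex.normSq_eq_norm_sq, Complex.normSq_apply]; simp; ring
  have hq : (1 + 2 * z.re ^ 2) / z.im ^ 2 * z.im ^ 2 = 1 + 2 * z.re ^ 2 := by field_simp
  have hq0 : 0 ≤ (1 + 2 * z.re ^ 2) / z.im ^ 2 := by positivity
  rw [hnorm]
  nlinarith [sq_nonneg (s - 2 * z.re), sq_nonneg z.im, mul_nonneg hq0 (sq_nonneg (s - z.re))]

lemma exists_norm_inv_ofReal_sub_sq_le {z : ℂ} (hz : z.im ≠ 0) :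
    ∃ K, ∀ s : ℝ, ‖((s : ℂ) - z)⁻¹‖ ^ 2 ≤ K * (1 + s ^ 2)⁻¹ := by
  refine ⟨2 + (1 + 2 * z.re ^ 2) / z.im ^ 2, fun s => ?_⟩
  have hpos : 0 < ‖(s : ℂ) - z‖ ^ 2 :=
    pow_pos (norm_pos_iff.mpr (ofReal_sub_ne_zero hz s)) 2
  rw [norm_inv, inv_pow, ← div_eq_mul_inv, inv_eq_one_div,
    div_le_div_iff₀ hpos (by positivity), one_mul]
  exact one_add_sq_le_mul_norm_ofReal_sub_sq hz s

lemma norm_ofReal_sub_le_two_mul {u₀ u : ℂ} (hu : dist u u₀ < |u₀.im| / 2) (s : ℝ) :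
    ‖(s : ℂ) - u₀‖ ≤ 2 * ‖(s : ℂ) - u‖ := by
  have him : |u₀.im| ≤ ‖(s : ℂ) - u₀‖ := by
    simpa using Complex.abs_im_le_norm ((s : ℂ) - u₀)
  have htri : ‖(s : ℂ) - u₀‖ ≤ ‖(s : ℂ) - u‖ + dist u u₀ := by
    rw [Complex.dist_eq]
    simpa using norm_sub_le_norm_sub_add_norm_sub (s : ℂ) u u₀
  linarith

lemma im_ne_zero_of_dist_lt {u₀ u : ℂ} (hu₀ : u₀.im ≠ 0) (hu : dist u u₀ < |u₀.im| / 2) :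
    u.im ≠ 0 := by
  have him : |u.im - u₀.im| ≤ dist u u₀ := by
    simpa [Complex.dist_eq] using Complex.abs_im_le_norm (u - u₀)
  intro h
  rw [h, zero_sub, abs_neg] at him
  have := abs_pos.mpr hu₀
  linarith

lemma norm_inv_ofReal_sub_le_two_mul {u₀ u : ℂ} (hu₀ : u₀.im ≠ 0)
    (hu : dist u u₀ < |u₀.im| / 2) (s : ℝ) :
    ‖((s : ℂ) - u)⁻¹‖ ≤ 2 * ‖((s : ℂ) - u₀)⁻¹‖ := by
  have h₀ : 0 < ‖(s : ℂ) - u₀‖ := norm_pos_iff.mpr (ofReal_sub_ne_zero hu₀ s)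
  have h : 0 < ‖(s : ℂ) - u‖ :=
    norm_pos_iff.mpr (ofReal_sub_ne_zero (im_ne_zero_of_dist_lt hu₀ hu) s)
  rw [norm_inv, norm_inv, ← div_eq_mul_inv, inv_eq_one_div, div_le_div_iff₀ h h₀, one_mul]
  exact norm_ofReal_sub_le_two_mul hu s

end Bounds

def IsCauchyDominated (f : ℝ → ℂ) : Prop :=
  Continuous f ∧ ∃ C, ∀ s, ‖f s‖ ≤ C * (1 + s ^ 2)⁻¹

lemma IsCauchyDominated.const_mul {f : ℝ → ℂ} (hf : IsCauchyDominated f) (c : ℂ) :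
    IsCauchyDominated fun s => c * f s := by
  obtain ⟨hcont, C, hC⟩ := hf
  refine ⟨continuous_const.mul hcont, ‖c‖ * C, fun s => ?_⟩
  rw [norm_mul, mul_assoc]
  exact mul_le_mul_of_nonneg_left (hC s) (norm_nonneg c)

lemma isCauchyDominated_inv_ofReal_sub_sub_inv_ofReal_sub {a b : ℂ} (ha : a.im ≠ 0)
    (hb : b.im ≠ 0) :
    IsCauchyDominated fun s => ((s : ℂ) - a)⁻¹ - ((s : ℂ) - b)⁻¹ := by
  have hcont : ∀ {c : ℂ}, c.im ≠ 0 → Continuous fun s : ℝ => ((s : ℂ) - c)⁻¹ := fun hc =>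
    (Complex.continuous_ofReal.sub continuous_const).inv₀ (ofReal_sub_ne_zero hc)
  obtain ⟨Ka, hKa⟩ := exists_norm_inv_ofReal_sub_sq_le ha
  obtain ⟨Kb, hKb⟩ := exists_norm_inv_ofReal_sub_sq_le hb
  refine ⟨(hcont ha).sub (hcont hb), ‖a - b‖ * (Ka + Kb) / 2, fun s => ?_⟩
  have hid : ((s : ℂ) - a)⁻¹ - ((s : ℂ) - b)⁻¹
      = (a - b) * (((s : ℂ) - a)⁻¹ * ((s : ℂ) - b)⁻¹) := by
    field_simp [ofReal_sub_ne_zero ha s, ofReal_sub_ne_zero hb s]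
    ring
  have hamgm := two_mul_le_add_sq ‖((s : ℂ) - a)⁻¹‖ ‖((s : ℂ) - b)⁻¹‖
  beta_reduce
  rw [hid, norm_mul, norm_mul]
  calc ‖a - b‖ * (‖((s : ℂ) - a)⁻¹‖ * ‖((s : ℂ) - b)⁻¹‖)
      ≤ ‖a - b‖ * ((Ka * (1 + s ^ 2)⁻¹ + Kb * (1 + s ^ 2)⁻¹) / 2) := by
        gcongr
        linarith [hKa s, hKb s]
    _ = ‖a - b‖ * (Ka + Kb) / 2 * (1 + s ^ 2)⁻¹ := by ring

lemma isCauchyDominated_Nfun (e : ℤ) {z : ℂ} (hz : z.im ≠ 0) :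
    IsCauchyDominated (Nfun e z) := by
  have hI : I.im ≠ 0 := by simp
  have hnegI : (-I).im ≠ 0 := by simp
  have hconj : (conj z).im ≠ 0 := by simpa using hz
  have hadd : ∀ s : ℝ, (s : ℂ) + I = s - (-I) := fun s => by ring
  unfold Nfun
  split_ifs
  · exact (isCauchyDominated_inv_ofReal_sub_sub_inv_ofReal_sub hz hI).const_mul _
  · simpa only [hadd] using
      (isCauchyDominated_inv_ofReal_sub_sub_inv_ofReal_sub hI hnegI).const_mul (1 / (2 * I))
  · simpa only [hadd] using
      (isCauchyDominated_inv_ofReal_sub_sub_inv_ofReal_sub hnegI hconj).const_mul (1 / (2 * I))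

section Integrability

variable {n : ℕ} {μ : Measure (Fin n → ℝ)}

lemma GrowthCondition.integrable (hμ : GrowthCondition n μ) :
    Integrable (fun t : Fin n → ℝ => ∏ ℓ, (1 + t ℓ ^ 2)⁻¹) μ := by
  refine ⟨Measurable.aestronglyMeasurable (by fun_prop), ?_⟩
  refine lt_of_eq_of_lt (lintegral_congr fun t => ?_) hμ
  exact Real.enorm_eq_ofReal (Finset.prod_nonneg fun ℓ _ => by positivity)

lemma exists_norm_prod_le {f : Fin n → ℝ → ℂ} (hf : ∀ ℓ, IsCauchyDominated (f ℓ))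
    (s : Finset (Fin n)) :
    ∃ C, ∀ t : Fin n → ℝ, ‖∏ ℓ ∈ s, f ℓ (t ℓ)‖ ≤ C * ∏ ℓ ∈ s, (1 + t ℓ ^ 2)⁻¹ := by
  choose C hC using fun ℓ => (hf ℓ).2
  refine ⟨∏ ℓ ∈ s, C ℓ, fun t => ?_⟩
  rw [norm_prod, ← Finset.prod_mul_distrib]
  exact Finset.prod_le_prod (fun ℓ _ => norm_nonneg _) fun ℓ _ => hC ℓ (t ℓ)

lemma GrowthCondition.integrable_prod (hμ : GrowthCondition n μ) {f : Fin n → ℝ → ℂ}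
    (hf : ∀ ℓ, IsCauchyDominated (f ℓ)) :
    Integrable (fun t : Fin n → ℝ => ∏ ℓ, f ℓ (t ℓ)) μ := by
  obtain ⟨C, hC⟩ := exists_norm_prod_le hf Finset.univ
  have hcont : Continuous fun t : Fin n → ℝ => ∏ ℓ, f ℓ (t ℓ) :=
    continuous_finsetProd _ fun ℓ _ => (hf ℓ).1.comp (continuous_apply ℓ)
  exact (hμ.integrable.const_mul C).mono' hcont.aestronglyMeasurable (ae_of_all _ hC)

end Integrability

section Holomorphy

lemma hasDerivAt_Nfun_neg_one {u : ℂ} {s : ℝ} (h : (s : ℂ) - u ≠ 0) :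
    HasDerivAt (fun u => Nfun (-1) u s) (1 / (2 * I) * ((s - u) ^ 2)⁻¹) u := by
  have hsub : HasDerivAt (fun u : ℂ => (s : ℂ) - u) (-1) u := by
    simpa using (hasDerivAt_id u).const_sub (s : ℂ)
  have := ((hsub.fun_inv h).sub_const ((s : ℂ) - I)⁻¹).const_mul (1 / (2 * I))
  rw [neg_neg, one_div ((_ : ℂ) ^ 2)] at this
  simpa only [Nfun_neg_one] using this

variable {α : Type*} [MeasurableSpace α] {μ : Measure α}

lemma differentiableAt_integral_Nfun_neg_one_mul {τ : α → ℝ} {k : α → ℂ} (hτ : Measurable τ)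
    (hk : AEStronglyMeasurable k μ) (hint : Integrable (fun x => (1 + τ x ^ 2)⁻¹ * ‖k x‖) μ)
    {u₀ : ℂ} (hu₀ : u₀.im ≠ 0) :
    DifferentiableAt ℂ (fun u => ∫ x, Nfun (-1) u (τ x) * k x ∂μ) u₀ := by
  obtain ⟨K, hK⟩ := exists_norm_inv_ofReal_sub_sq_le hu₀
  obtain ⟨-, C, hC⟩ := isCauchyDominated_Nfun (-1) hu₀
  have hNmeas : ∀ u, Measurable fun s => Nfun (-1) u s := fun u => by
    simp only [Nfun_neg_one]
    fun_prop
  have hball : ∀ u ∈ Metric.ball u₀ (|u₀.im| / 2), ∀ s : ℝ,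
      ‖1 / (2 * I) * (((s : ℂ) - u) ^ 2)⁻¹‖ ≤ 2 * K * (1 + s ^ 2)⁻¹ := by
    intro u hu s
    have h2 := norm_inv_ofReal_sub_le_two_mul hu₀ hu s
    have hhalf : ‖(1 / (2 * I) : ℂ)‖ = 1 / 2 := by simp
    rw [norm_mul, hhalf, ← inv_pow, norm_pow]
    nlinarith [hK s, norm_nonneg ((s : ℂ) - u)⁻¹]
  refine (hasDerivAt_integral_of_dominated_loc_of_deriv_le
    (F' := fun u x => 1 / (2 * I) * (((τ x : ℂ) - u) ^ 2)⁻¹ * k x)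
    (bound := fun x => 2 * K * ((1 + τ x ^ 2)⁻¹ * ‖k x‖))
    (Metric.ball_mem_nhds u₀ (by positivity : 0 < |u₀.im| / 2))
    (Eventually.of_forall fun u => ((hNmeas u).comp hτ).aestronglyMeasurable.mul hk)
    ?_ ?_ ?_ (hint.const_mul _) ?_).2.differentiableAt
  · refine (hint.const_mul C).mono' (((hNmeas u₀).comp hτ).aestronglyMeasurable.mul hk)
      (ae_of_all _ fun x => ?_)
    change ‖Nfun (-1) u₀ (τ x) * k x‖ ≤ _
    rw [norm_mul, ← mul_assoc]
    exact mul_le_mul_of_nonneg_right (hC (τ x)) (norm_nonneg _)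
  · exact (Measurable.aestronglyMeasurable (by fun_prop)).mul hk
  · refine ae_of_all _ fun x u hu => ?_
    rw [norm_mul, ← mul_assoc]
    exact mul_le_mul_of_nonneg_right (hball u hu (τ x)) (norm_nonneg _)
  · refine ae_of_all _ fun x u hu => ?_
    exact (hasDerivAt_Nfun_neg_one
      (ofReal_sub_ne_zero (im_ne_zero_of_dist_lt hu₀ hu) (τ x))).mul_const (k x)

end Holomorphy

section MixedIntegral

variable {n : ℕ} {μ : Measure (Fin n → ℝ)}

/-- `ρ ∈ {-1, 0, 1}ⁿ` is encoded by `Fin 3` via `k ↦ k - 1`, as in `NevanlinnaCondition`. -/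
noncomputable def mixedIntegral (μ : Measure (Fin n → ℝ)) (v : Fin n → ℂ)
    (ρ : Fin n → Fin 3) : ℂ :=
  ∫ t, ∏ j, Nfun ((ρ j : ℤ) - 1) (v j) (t j) ∂μ

def mixedSet (n : ℕ) : Finset (Fin n → Fin 3) :=
  univ.filter fun ρ => (∃ j, ρ j = 0) ∧ ∃ j, ρ j = 2

lemma mixedIntegral_congr {v w : Fin n → ℂ} {ρ : Fin n → Fin 3}
    (h : ∀ j, ρ j ≠ 1 → v j = w j) : mixedIntegral μ v ρ = mixedIntegral μ w ρ := by
  unfold mixedIntegral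
  congr 1 with t
  refine Finset.prod_congr rfl fun j _ => ?_
  by_cases hρ : ρ j = 1
  · rw [hρ]
    exact Nfun_zero_eq_Nfun_zero _ _ _
  · rw [h j hρ]

lemma mixedIntegral_update_I {v : Fin n → ℂ} {ρ : Fin n → Fin 3} {j : Fin n} (hρ : ρ j ≠ 1) :
    mixedIntegral μ (Function.update v j I) ρ = 0 := by
  have he : (ρ j : ℤ) - 1 ≠ 0 := by
    rw [sub_ne_zero, Ne, ← Nat.cast_one, Nat.cast_inj, ← Fin.val_one, ← Fin.ext_iff]
    exact hρ
  have hzero : ∀ t : Fin n → ℝ,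
      ∏ ℓ, Nfun ((ρ ℓ : ℤ) - 1) (Function.update v j I ℓ) (t ℓ) = 0 := fun t =>
    Finset.prod_eq_zero (Finset.mem_univ j) (by rw [Function.update_self, Nfun_I he])
  simp only [mixedIntegral, hzero, integral_zero]

lemma conj_mixedIntegral (v : Fin n → ℂ) (ρ : Fin n → Fin 3) :
    conj (mixedIntegral μ v ρ) = mixedIntegral μ v (Fin.rev ∘ ρ) := by
  simp only [mixedIntegral, ← integral_conj, map_prod, conj_Nfun, Function.comp_apply]

lemma differentiableAt_mixedIntegral_update (hμ : GrowthCondition n μ) {v : Fin n → ℂ}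
    (hv : ∀ ℓ, (v ℓ).im ≠ 0) {ρ : Fin n → Fin 3} {j : Fin n} (hρ : ρ j = 0) {u₀ : ℂ}
    (hu₀ : u₀.im ≠ 0) :
    DifferentiableAt ℂ (fun u => mixedIntegral μ (Function.update v j u) ρ) u₀ := by
  set k : (Fin n → ℝ) → ℂ := fun t => ∏ ℓ ∈ univ \ {j}, Nfun ((ρ ℓ : ℤ) - 1) (v ℓ) (t ℓ)
  have hsplit : ∀ u t, ∏ ℓ, Nfun ((ρ ℓ : ℤ) - 1) (Function.update v j u ℓ) (t ℓ)
      = Nfun (-1) u (t j) * k t := by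
    intro u t
    rw [← Finset.prod_update_of_mem (Finset.mem_univ j)]
    refine Finset.prod_congr rfl fun ℓ _ => ?_
    rcases eq_or_ne ℓ j with rfl | hℓ
    · simp [hρ]
    · simp [hℓ]
  have hfactor : ∀ ℓ, IsCauchyDominated (Nfun ((ρ ℓ : ℤ) - 1) (v ℓ)) :=
    fun ℓ => isCauchyDominated_Nfun _ (hv ℓ)
  have hk : Continuous k :=
    continuous_finsetProd _ fun ℓ _ => (hfactor ℓ).1.comp (continuous_apply ℓ)
  obtain ⟨C, hC⟩ := exists_norm_prod_le hfactor (univ \ {j})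
  have hint : Integrable (fun t : Fin n → ℝ => (1 + t j ^ 2)⁻¹ * ‖k t‖) μ := by
    refine (hμ.integrable.const_mul C).mono'
      ((by fun_prop : Measurable fun t : Fin n → ℝ => (1 + t j ^ 2)⁻¹).mul
        hk.measurable.norm).aestronglyMeasurable (ae_of_all _ fun t => ?_)
    rw [Real.norm_of_nonneg (by positivity),
      Finset.prod_eq_mul_prod_sdiff_singleton_of_mem (Finset.mem_univ j)]
    calc (1 + t j ^ 2)⁻¹ * ‖k t‖
        ≤ (1 + t j ^ 2)⁻¹ * (C * ∏ ℓ ∈ univ \ {j}, (1 + t ℓ ^ 2)⁻¹) := by gcongr; exact hC t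
      _ = C * ((1 + t j ^ 2)⁻¹ * ∏ ℓ ∈ univ \ {j}, (1 + t ℓ ^ 2)⁻¹) := by ring
  simp only [mixedIntegral, hsplit]
  exact differentiableAt_integral_Nfun_neg_one_mul (measurable_pi_apply j)
    hk.aestronglyMeasurable hint hu₀

end MixedIntegral

section Antiholomorphic

lemma HasDerivAt.eq_zero_of_eventuallyEq_conj {f g : ℂ → ℂ} {c d u : ℂ} (hf : HasDerivAt f c u)
    (hg : HasDerivAt g d u) (hfg : f =ᶠ[𝓝 u] fun w => conj (g w)) : c = 0 := by
  have hconj : HasFDerivAt (fun w => conj (g w))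
      (Complex.conjCLE.toContinuousLinearMap.comp
        ((ContinuousLinearMap.smulRight (1 : ℂ →L[ℂ] ℂ) d).restrictScalars ℝ)) u :=
    Complex.conjCLE.toContinuousLinearMap.hasFDerivAt.comp u
      (hg.hasFDerivAt.restrictScalars ℝ)
  -- the real derivative of `f` is both `h ↦ c h` and `h ↦ conj (d h)`; test at `h = 1, I`
  have hderiv := (hf.hasFDerivAt.restrictScalars ℝ).unique (hconj.congr_of_eventuallyEq hfg)
  have h₁ : c = conj d := by simpa using congrArg (fun L => L 1) hderiv
  have hI : I * c = conj (I * d) := by simpa [mul_comm] using congrArg (fun L => L I) hderiv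
  rw [map_mul, Complex.conj_I, ← h₁] at hI
  have h2I : (2 * I : ℂ) ≠ 0 := by simp
  exact (mul_eq_zero.mp (by linear_combination hI : 2 * I * c = 0)).resolve_left h2I

lemma IsOpen.eq_of_eqOn_conj {s : Set ℂ} (hs : IsOpen s) (hs' : IsPreconnected s) {f g : ℂ → ℂ}
    (hf : DifferentiableOn ℂ f s) (hg : DifferentiableOn ℂ g s)
    (hfg : ∀ u ∈ s, f u = conj (g u)) {x y : ℂ} (hx : x ∈ s) (hy : y ∈ s) : f x = f y :=
  hs.is_const_of_deriv_eq_zero hs' hf (fun _ hu =>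
    (hf.differentiableAt (hs.mem_nhds hu)).hasDerivAt.eq_zero_of_eventuallyEq_conj
      (hg.differentiableAt (hs.mem_nhds hu)).hasDerivAt
      (eventually_of_mem (hs.mem_nhds hu) hfg)) hx hy

lemma IsOpen.eq_zero_of_add_add_conj_eq_zero {s : Set ℂ} (hs : IsOpen s) (hs' : IsPreconnected s)
    {f g : ℂ → ℂ} {c : ℂ} (hf : DifferentiableOn ℂ f s) (hg : DifferentiableOn ℂ g s)
    (h : ∀ u ∈ s, f u + c + conj (g u) = 0) {x₀ : ℂ} (hx₀ : x₀ ∈ s) (hf₀ : f x₀ = 0)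
    (hg₀ : g x₀ = 0) : c = 0 ∧ ∀ u ∈ s, f u = 0 ∧ g u = 0 := by
  have hf0 : ∀ x ∈ s, f x = 0 := fun x hx => by
    rw [← hf₀]
    refine hs.eq_of_eqOn_conj hs' hf (g := fun u => -conj c - g u)
      ((differentiableOn_const _).sub hg) (fun u hu => ?_) hx hx₀
    simp only [map_sub, map_neg, Complex.conj_conj]
    linear_combination h u hu
  have hc : c = 0 := by simpa [hf₀, hg₀] using h x₀ hx₀
  refine ⟨hc, fun u hu => ⟨hf0 u hu, ?_⟩⟩
  simpa [hf0 u hu, hc] using h u hu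

end Antiholomorphic

section Separation

variable {n : ℕ} {μ : Measure (Fin n → ℝ)}

noncomputable def partialMixedSum (μ : Measure (Fin n → ℝ)) (D : Finset (Fin n))
    (σ : Fin n → Fin 3) (v : Fin n → ℂ) : ℂ :=
  ∑ ρ ∈ (mixedSet n).filter (fun ρ => ∀ j ∈ D, ρ j = σ j), mixedIntegral μ v ρ

lemma sum_partialMixedSum_insert {D : Finset (Fin n)} {j : Fin n} (hj : j ∉ D)
    (σ : Fin n → Fin 3) (v : Fin n → ℂ) :
    ∑ e, partialMixedSum μ (insert j D) (Function.update σ j e) v = partialMixedSum μ D σ v := by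
  rw [partialMixedSum, ← Finset.sum_fiberwise _ (fun ρ : Fin n → Fin 3 => ρ j)]
  refine Finset.sum_congr rfl fun e _ => ?_
  rw [partialMixedSum, Finset.filter_filter]
  refine Finset.sum_congr (Finset.filter_congr fun ρ _ => ?_) fun _ _ => rfl
  simp only [Finset.forall_mem_insert, Function.update_self]
  constructor
  · rintro ⟨he, hD⟩
    exact ⟨fun ℓ hℓ => by rw [hD ℓ hℓ, Function.update_of_ne (ne_of_mem_of_not_mem hℓ hj)], he⟩
  · rintro ⟨hD, he⟩
    exact ⟨he, fun ℓ hℓ => by rw [hD ℓ hℓ, Function.update_of_ne (ne_of_mem_of_not_mem hℓ hj)]⟩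

section FixedCoordinate

variable {D : Finset (Fin n)} {σ : Fin n → Fin 3} {j : Fin n}

lemma partialMixedSum_update_I (hj : j ∈ D) (hσ : σ j ≠ 1) (v : Fin n → ℂ) :
    partialMixedSum μ D σ (Function.update v j I) = 0 :=
  Finset.sum_eq_zero fun ρ hρ =>
    mixedIntegral_update_I (by rw [(Finset.mem_filter.mp hρ).2 j hj]; exact hσ)

lemma partialMixedSum_update_of_eq_one (hj : j ∈ D) (hσ : σ j = 1) (v : Fin n → ℂ) (u u' : ℂ) :
    partialMixedSum μ D σ (Function.update v j u)
      = partialMixedSum μ D σ (Function.update v j u') :=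
  Finset.sum_congr rfl fun ρ hρ => mixedIntegral_congr fun ℓ hℓ => by
    rcases eq_or_ne ℓ j with rfl | hne
    · exact absurd ((Finset.mem_filter.mp hρ).2 ℓ hj ▸ hσ) hℓ
    · simp [hne]

lemma differentiableAt_partialMixedSum_update (hμ : GrowthCondition n μ) (hj : j ∈ D)
    (hσ : σ j = 0) {v : Fin n → ℂ} (hv : ∀ ℓ, (v ℓ).im ≠ 0) {u₀ : ℂ} (hu₀ : u₀.im ≠ 0) :
    DifferentiableAt ℂ (fun u => partialMixedSum μ D σ (Function.update v j u)) u₀ :=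
  DifferentiableAt.fun_sum fun ρ hρ => differentiableAt_mixedIntegral_update hμ hv
    (by rw [(Finset.mem_filter.mp hρ).2 j hj]; exact hσ) hu₀

lemma differentiableAt_conj_partialMixedSum_update (hμ : GrowthCondition n μ) (hj : j ∈ D)
    (hσ : σ j = 2) {v : Fin n → ℂ} (hv : ∀ ℓ, (v ℓ).im ≠ 0) {u₀ : ℂ} (hu₀ : u₀.im ≠ 0) :
    DifferentiableAt ℂ (fun u => conj (partialMixedSum μ D σ (Function.update v j u))) u₀ := by
  simp only [partialMixedSum, map_sum, conj_mixedIntegral]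
  exact DifferentiableAt.fun_sum fun ρ hρ => differentiableAt_mixedIntegral_update hμ hv
    (by simp [(Finset.mem_filter.mp hρ).2 j hj, hσ]) hu₀

end FixedCoordinate

lemma partialMixedSum_eq_zero (hμg : GrowthCondition n μ) (hμN : NevanlinnaCondition n μ)
    (D : Finset (Fin n)) (σ : Fin n → Fin 3) {v : Fin n → ℂ} (hv : ∀ j, 0 < (v j).im) :
    partialMixedSum μ D σ v = 0 := by
  induction D using Finset.induction_on generalizing σ v with
  | empty =>
    rw [partialMixedSum,
      Finset.filter_true_of_mem fun _ _ j hj => absurd hj (Finset.notMem_empty j)]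
    exact hμN v hv
  | insert j D hj ih =>
    set S : Fin 3 → ℂ → ℂ := fun e u =>
      partialMixedSum μ (insert j D) (Function.update σ j e) (Function.update v j u)
    have hjD : j ∈ insert j D := Finset.mem_insert_self j D
    have hvne : ∀ ℓ, (v ℓ).im ≠ 0 := fun ℓ => (hv ℓ).ne'
    have hS1 : ∀ u, S 1 u = S 1 I := fun u =>
      partialMixedSum_update_of_eq_one hjD (by simp) v u I
    have hsum : ∀ u ∈ {u : ℂ | 0 < u.im}, S 0 u + S 1 I + conj (conj (S 2 u)) = 0 := by
      intro u hu
      have hvu : ∀ ℓ, 0 < (Function.update v j u ℓ).im := fun ℓ => by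
        rcases eq_or_ne ℓ j with rfl | hne
        · simpa using hu
        · simpa [hne] using hv ℓ
      rw [Complex.conj_conj, ← hS1 u, ← ih σ hvu, ← sum_partialMixedSum_insert hj,
        Fin.sum_univ_three]
    have hS0 : DifferentiableOn ℂ (S 0) {u : ℂ | 0 < u.im} := fun u hu =>
      (differentiableAt_partialMixedSum_update hμg hjD (by simp) hvne
        (ne_of_gt hu)).differentiableWithinAt
    have hS2 : DifferentiableOn ℂ (fun u => conj (S 2 u)) {u : ℂ | 0 < u.im} := fun u hu =>
      (differentiableAt_conj_partialMixedSum_update hμg hjD (by simp) hvne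
        (ne_of_gt hu)).differentiableWithinAt
    have hopen : IsOpen {u : ℂ | 0 < u.im} := isOpen_lt continuous_const Complex.continuous_im
    obtain ⟨hc, hS02⟩ := hopen.eq_zero_of_add_add_conj_eq_zero
      (convex_halfSpace_im_gt 0).isPreconnected hS0 hS2 hsum (x₀ := I) (by simp)
      (partialMixedSum_update_I hjD (by simp) v)
      (by simp [S, partialMixedSum_update_I hjD (by simp : Function.update σ j 2 j ≠ 1) v])
    have hS : ∀ e, S e (v j) = 0 := by
      intro e
      fin_cases e
      · exact (hS02 _ (hv j)).1
      · exact (hS1 _).trans hc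
      · simpa using (hS02 _ (hv j)).2
    simpa [S] using hS (σ j)

lemma mixedIntegral_eq_zero (hμg : GrowthCondition n μ) (hμN : NevanlinnaCondition n μ)
    {ρ : Fin n → Fin 3} (hρ : ρ ∈ mixedSet n) {v : Fin n → ℂ} (hv : ∀ j, 0 < (v j).im) :
    mixedIntegral μ v ρ = 0 := by
  have hsingle : (mixedSet n).filter (fun ρ' => ∀ j ∈ univ, ρ' j = ρ j) = {ρ} := by
    ext ρ'
    simp only [Finset.mem_filter, Finset.mem_univ, forall_const, Finset.mem_singleton]
    constructor
    · rintro ⟨-, h⟩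
      exact funext h
    · rintro rfl
      exact ⟨hρ, fun _ => rfl⟩
  have h := partialMixedSum_eq_zero hμg hμN univ ρ hv
  rwa [partialMixedSum, hsingle, Finset.sum_singleton] at h

end Separation

section Kernel

variable {n : ℕ} {μ : Measure (Fin n → ℝ)}

noncomputable def upperRep (z : ℂ) : ℂ := if z.im < 0 then conj z else z

/-- The coefficients in `(s - z)⁻¹ - (s + i)⁻¹ = 2i ∑ₖ c(z, k) N_{k-1}(upperRep z, s)`, which is
`N_{-1}(z, ·) + N_0` for `Im z ≥ 0` and `-N_1(z̄, ·)` for `Im z < 0`. -/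
noncomputable def kernelCoeff (z : ℂ) (k : Fin 3) : ℂ :=
  if z.im < 0 then (if k = 2 then -1 else 0) else (if k = 2 then 0 else 1)

lemma upperRep_im_pos {z : ℂ} (hz : z.im ≠ 0) : 0 < (upperRep z).im := by
  unfold upperRep
  split_ifs with h
  · simpa using h
  · exact lt_of_le_of_ne (not_lt.mp h) hz.symm

lemma kernelCoeff_ne_zero_iff {z : ℂ} {k : Fin 3} :
    kernelCoeff z k ≠ 0 ↔ (k = 2 ↔ z.im < 0) := by
  unfold kernelCoeff
  split_ifs <;> simp_all

lemma inv_ofReal_sub_sub_inv_ofReal_add_I (z : ℂ) (s : ℝ) :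
    ((s : ℂ) - z)⁻¹ - ((s : ℂ) + I)⁻¹
      = 2 * I * ∑ k : Fin 3, kernelCoeff z k * Nfun ((k : ℤ) - 1) (upperRep z) s := by
  by_cases h : z.im < 0 <;> simp [h, Fin.sum_univ_three, kernelCoeff, upperRep, Nfun] <;>
    ring_nf <;> simp [Complex.I_sq] <;> ring

lemma kernelK_eq_sum (z : Fin n → ℂ) (t : Fin n → ℝ) :
    kernelK n z t = 2 * I * ∑ ρ : Fin n → Fin 3, (∏ ℓ, kernelCoeff (z ℓ) (ρ ℓ)) *
        ∏ ℓ, Nfun ((ρ ℓ : ℤ) - 1) (upperRep (z ℓ)) (t ℓ)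
      - I * ∏ ℓ, Nfun 0 I (t ℓ) := by
  have hN₀ : ∀ s : ℝ, ((s : ℂ) - I)⁻¹ - ((s : ℂ) + I)⁻¹ = 2 * I * Nfun 0 I s := fun s => by
    simp only [Nfun_zero]
    field_simp
  have h2I : (2 * I : ℂ) ^ n ≠ 0 := by simp
  simp only [kernelK, inv_ofReal_sub_sub_inv_ofReal_add_I, hN₀, Finset.prod_mul_distrib,
    Finset.prod_const, Finset.card_univ, Fintype.card_fin, Fintype.prod_sum]
  field_simp
  ring

lemma integral_kernelK (hμ : GrowthCondition n μ) {z : Fin n → ℂ} (hz : z ∈ polyCutPlane n) :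
    ∫ t, kernelK n z t ∂μ = 2 * I * ∑ ρ : Fin n → Fin 3, (∏ ℓ, kernelCoeff (z ℓ) (ρ ℓ)) *
        mixedIntegral μ (fun ℓ => upperRep (z ℓ)) ρ
      - I * ∫ t, ∏ ℓ, Nfun 0 I (t ℓ) ∂μ := by
  have hint : ∀ (v : Fin n → ℂ), (∀ ℓ, (v ℓ).im ≠ 0) → ∀ ρ : Fin n → Fin 3,
      Integrable (fun t : Fin n → ℝ => ∏ ℓ, Nfun ((ρ ℓ : ℤ) - 1) (v ℓ) (t ℓ)) μ :=
    fun v hv ρ => hμ.integrable_prod fun ℓ => isCauchyDominated_Nfun _ (hv ℓ)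
  have hz' : ∀ ℓ, (upperRep (z ℓ)).im ≠ 0 := fun ℓ => (upperRep_im_pos (hz ℓ)).ne'
  simp_rw [kernelK_eq_sum]
  rw [integral_sub, integral_const_mul, integral_finsetSum, integral_const_mul]
  · simp only [mixedIntegral, integral_const_mul]
  · exact fun ρ _ => (hint _ hz' ρ).const_mul _
  · exact (integrable_finsetSum _ fun ρ _ => (hint _ hz' ρ).const_mul _).const_mul _
  · exact (hμ.integrable_prod fun _ => isCauchyDominated_Nfun 0 (by simp : I.im ≠ 0)).const_mul I

end Kernel

lemma prod_kernelCoeff_mul_mixedIntegral_eq {n : ℕ} {μ : Measure (Fin n → ℝ)}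
    (hμg : GrowthCondition n μ) (hμN : NevanlinnaCondition n μ) {z w : Fin n → ℂ}
    (hz : z ∈ polyCutPlane n) (hw : w ∈ polyCutPlane n) (hlow : ∃ j, (z j).im < 0)
    (hiff : ∀ j, (z j).im < 0 ↔ (w j).im < 0) (heq : ∀ j, (z j).im < 0 → z j = w j)
    (ρ : Fin n → Fin 3) :
    (∏ ℓ, kernelCoeff (z ℓ) (ρ ℓ)) * mixedIntegral μ (fun ℓ => upperRep (z ℓ)) ρ
      = (∏ ℓ, kernelCoeff (w ℓ) (ρ ℓ)) * mixedIntegral μ (fun ℓ => upperRep (w ℓ)) ρ := by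
  have hcoeff : ∀ ℓ, kernelCoeff (z ℓ) (ρ ℓ) = kernelCoeff (w ℓ) (ρ ℓ) := fun ℓ => by
    simp only [kernelCoeff, hiff]
  rw [Finset.prod_congr rfl fun ℓ _ => hcoeff ℓ]
  by_cases hzero : ∏ ℓ, kernelCoeff (w ℓ) (ρ ℓ) = 0
  · rw [hzero, zero_mul, zero_mul]
  have hρ : ∀ ℓ, ρ ℓ = 2 ↔ (z ℓ).im < 0 := fun ℓ => by
    rw [hiff, ← kernelCoeff_ne_zero_iff]
    exact Finset.prod_ne_zero_iff.mp hzero ℓ (Finset.mem_univ ℓ)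
  by_cases hmixed : ∃ j, ρ j = 0
  · have hmem : ρ ∈ mixedSet n := by
      obtain ⟨j, hj⟩ := hlow
      exact Finset.mem_filter.mpr ⟨Finset.mem_univ ρ, hmixed, j, (hρ j).mpr hj⟩
    rw [mixedIntegral_eq_zero hμg hμN hmem fun ℓ => upperRep_im_pos (hz ℓ),
      mixedIntegral_eq_zero hμg hμN hmem fun ℓ => upperRep_im_pos (hw ℓ)]
  · simp only [not_exists] at hmixed
    refine congrArg _ (mixedIntegral_congr fun ℓ hℓ => ?_)
    have hlowℓ : (z ℓ).im < 0 := (hρ ℓ).mp (by have := hmixed ℓ; omega)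
    simp [upperRep, (hiff ℓ).mp hlowℓ, heq ℓ hlowℓ]

theorem symmetric_extension_var_nondep_general
    (n : ℕ) (a : ℝ) (μ : Measure (Fin n → ℝ))
    (hμg : GrowthCondition n μ) (hμN : NevanlinnaCondition n μ) :
    VarNonDep n (fun z => (a : ℂ) + (1 / (Real.pi : ℂ) ^ n) * ∫ t, kernelK n z t ∂μ) := by
  intro z hz w hw hlow hiff heq
  dsimp only
  rw [integral_kernelK hμg hz, integral_kernelK hμg hw]
  congr 4
  exact Finset.sum_congr rfl fun ρ _ =>
    prod_kernelCoeff_mul_mixedIntegral_eq hμg hμN hz hw hlow hiff heq ρ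

/-- Proposition 2.5: for `n ≥ 2`, the symmetric extension of a Herglotz-Nevanlinna function
with `b = 0` satisfies the variable non-dependence property. -/
theorem symmetric_extension_var_nondep
    (n : ℕ) (hn : 2 ≤ n) (a : ℝ) (μ : Measure (Fin n → ℝ))
    (hμg : GrowthCondition n μ) (hμN : NevanlinnaCondition n μ) :
    VarNonDep n (fun z => (a : ℂ) + (1 / (Real.pi : ℂ) ^ n) * ∫ t, kernelK n z t ∂μ) :=
  symmetric_extension_var_nondep_general n a μ hμg hμN
end

section
/- Let n ∈ ℕ, a ∈ ℝ, b ∈ [0,∞)^n and let μ be a positive Borel measure on ℝ^n satisfying the growth condition and the Nevanlinna condition, and let h(z) := a + Σ_{ℓ=1}^n b_ℓ z_ℓ + π^{−n} ∫_{ℝ^n} K_n(z,t) dμ(t) for z ∈ ℂ^{+n}. Then for every index j ∈ {1,…,n}, every angle θ ∈ (0, π/2], and every fixed choice of the components z_k ∈ ℂ^+ for k ≠ j, one has h(z)/z_j → b_j as |z_j| → ∞ within the upper Stoltz domain of angle θ; in particular this limit is independent of the entries of z at the non-j-th positions. -/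
open Complex MeasureTheory Finset Filter Topology

/-! Separating the `j`-th coordinate, `h(z)/z_j = b_j + c/z_j + π^{-n} (∫ K_n(z,t) dμ(t))/z_j`
with `c` independent of `z_j`. The kernel is a combination of products of the factors
`1/(t-ζ) - 1/(t+i) = (ζ+i)/((t-ζ)(t+i))`, each `O(1/(1+t²))` with a constant depending on `ζ`.
In the Stoltz domain `Im w ≥ sin θ · |w|`, so for `ζ = w` that constant is `O(|w|)`, and
dominated convergence against `∏ (1+t_ℓ²)⁻¹`, integrable by the growth condition, shows that
the part of the integral depending on `w` is `o(|w|)`. -/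

noncomputable def cauchyDiff (ζ : ℂ) (t : ℝ) : ℂ := ((t : ℂ) - ζ)⁻¹ - ((t : ℂ) + I)⁻¹

noncomputable def growthWeight (n : ℕ) (t : Fin n → ℝ) : ℝ := ∏ ℓ : Fin n, (1 + (t ℓ) ^ 2)⁻¹

lemma norm_ofReal_add_I (t : ℝ) : ‖(t : ℂ) + I‖ = √(1 + t ^ 2) := by
  simpa [add_comm] using norm_add_mul_I t 1

lemma norm_cauchyDiff_le {ζ : ℂ} {t K : ℝ} (hK0 : 0 ≤ K)
    (hK : 1 + t ^ 2 ≤ K ^ 2 * ‖(t : ℂ) - ζ‖ ^ 2) :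
    ‖cauchyDiff ζ t‖ ≤ ‖ζ + I‖ * K * (1 + t ^ 2)⁻¹ := by
  have hsub : (t : ℂ) - ζ ≠ 0 := by
    rintro h
    rw [h, norm_zero] at hK
    nlinarith
  have hsqrt : √(1 + t ^ 2) ≤ K * ‖(t : ℂ) - ζ‖ :=
    Real.sqrt_le_iff.mpr ⟨by positivity, by rwa [mul_pow]⟩
  have hI : (t : ℂ) + I ≠ 0 := fun h => by simpa using congrArg im h
  have heq : cauchyDiff ζ t = (ζ + I) / (((t : ℂ) - ζ) * ((t : ℂ) + I)) := by
    unfold cauchyDiff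
    field_simp
    ring
  have hpos : 0 < √(1 + t ^ 2) := by positivity
  rw [heq, norm_div, norm_mul, norm_ofReal_add_I, div_le_iff₀ (by positivity)]
  calc ‖ζ + I‖ = ‖ζ + I‖ * (√(1 + t ^ 2) * √(1 + t ^ 2)) * (1 + t ^ 2)⁻¹ := by
        rw [Real.mul_self_sqrt (by positivity)]; field_simp
    _ ≤ ‖ζ + I‖ * ((K * ‖(t : ℂ) - ζ‖) * √(1 + t ^ 2)) * (1 + t ^ 2)⁻¹ := by gcongr
    _ = _ := by ring

lemma one_add_sq_mul_im_sq_le (ζ : ℂ) (t : ℝ) :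
    (1 + t ^ 2) * ζ.im ^ 2 ≤ (1 + 2 * ‖ζ‖ ^ 2) * ‖(t : ℂ) - ζ‖ ^ 2 := by
  rw [Complex.sq_norm, Complex.sq_norm, normSq_apply, normSq_apply]
  simp only [sub_re, sub_im, ofReal_re, ofReal_im, zero_sub]
  nlinarith [sq_nonneg (t - 2 * ζ.re), sq_nonneg (t - ζ.re), sq_nonneg ζ.re, sq_nonneg ζ.im,
    mul_nonneg (sq_nonneg ζ.im) (sq_nonneg (t - 2 * ζ.re))]

lemma norm_cauchyDiff_le_of_im_ne_zero {ζ : ℂ} (hζ : ζ.im ≠ 0) (t : ℝ) :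
    ‖cauchyDiff ζ t‖ ≤ ‖ζ + I‖ * (√(1 + 2 * ‖ζ‖ ^ 2) / |ζ.im|) * (1 + t ^ 2)⁻¹ := by
  refine norm_cauchyDiff_le (by positivity) ?_
  rw [div_pow, Real.sq_sqrt (by positivity), sq_abs, div_mul_eq_mul_div,
    le_div_iff₀ (by positivity)]
  exact one_add_sq_mul_im_sq_le ζ t

lemma sin_mul_norm_le_im_of_mem_upperStoltz {θ : ℝ} (hθ : 0 < θ) {w : ℂ}
    (hw : w ∈ upperStoltz θ) : Real.sin θ * ‖w‖ ≤ w.im := by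
  obtain ⟨-, hθw, hwθ⟩ := hw
  have hsin : Real.sin θ ≤ Real.sin (arg w) := by
    rcases le_total (arg w) (Real.pi / 2) with hle | hge
    · exact Real.sin_le_sin_of_le_of_le_pi_div_two (by linarith) hle hθw
    · rw [← Real.sin_pi_sub (arg w)]
      exact Real.sin_le_sin_of_le_of_le_pi_div_two (by linarith) (by linarith) (by linarith)
  calc Real.sin θ * ‖w‖ ≤ Real.sin (arg w) * ‖w‖ := by gcongr
    _ = w.im := by rw [mul_comm, norm_mul_sin_arg]

lemma norm_cauchyDiff_div_le_of_mem_upperStoltz {θ : ℝ} (hθ : 0 < θ) {w : ℂ}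
    (hw : w ∈ upperStoltz θ) (hw1 : 1 ≤ ‖w‖) (t : ℝ) :
    ‖cauchyDiff w t / w‖ ≤ 2 * (√3 / Real.sin θ) * (1 + t ^ 2)⁻¹ := by
  have hs : 0 < Real.sin θ :=
    Real.sin_pos_of_pos_of_lt_pi hθ (by linarith [hw.2.1.trans hw.2.2, Real.pi_pos])
  have him := sin_mul_norm_le_im_of_mem_upperStoltz hθ hw
  have hK : 1 + t ^ 2 ≤ (√3 / Real.sin θ) ^ 2 * ‖(t : ℂ) - w‖ ^ 2 := by
    rw [div_pow, Real.sq_sqrt (by norm_num), div_mul_eq_mul_div, le_div_iff₀ (by positivity)]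
    have h3 : (1 + t ^ 2) * Real.sin θ ^ 2 * ‖w‖ ^ 2 ≤ 3 * ‖(t : ℂ) - w‖ ^ 2 * ‖w‖ ^ 2 :=
      calc (1 + t ^ 2) * Real.sin θ ^ 2 * ‖w‖ ^ 2 = (1 + t ^ 2) * (Real.sin θ * ‖w‖) ^ 2 := by ring
        _ ≤ (1 + t ^ 2) * w.im ^ 2 := by gcongr
        _ ≤ (1 + 2 * ‖w‖ ^ 2) * ‖(t : ℂ) - w‖ ^ 2 := one_add_sq_mul_im_sq_le w t
        _ ≤ (3 * ‖w‖ ^ 2) * ‖(t : ℂ) - w‖ ^ 2 := by gcongr; nlinarith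
        _ = _ := by ring
    exact le_of_mul_le_mul_right h3 (by positivity)
  have hwI : ‖w + I‖ ≤ 2 * ‖w‖ := by
    calc ‖w + I‖ ≤ ‖w‖ + 1 := by simpa using norm_add_le w I
      _ ≤ 2 * ‖w‖ := by linarith
  rw [norm_div, div_le_iff₀ (by positivity)]
  calc ‖cauchyDiff w t‖ ≤ ‖w + I‖ * (√3 / Real.sin θ) * (1 + t ^ 2)⁻¹ :=
        norm_cauchyDiff_le (by positivity) hK
    _ ≤ 2 * ‖w‖ * (√3 / Real.sin θ) * (1 + t ^ 2)⁻¹ := by gcongr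
    _ = _ := by ring

lemma integrable_growthWeight {n : ℕ} {μ : Measure (Fin n → ℝ)} (hμ : GrowthCondition n μ) :
    Integrable (growthWeight n) μ := by
  have hmeas : Measurable (growthWeight n) := by
    unfold growthWeight
    fun_prop
  refine ⟨hmeas.aestronglyMeasurable, ?_⟩
  rw [hasFiniteIntegral_iff_ofReal (ae_of_all _ fun t => by unfold growthWeight; positivity)]
  exact hμ

lemma exists_norm_prod_cauchyDiff_le {n : ℕ} (s : Finset (Fin n)) {ζ : Fin n → ℂ}
    (hζ : ∀ ℓ ∈ s, (ζ ℓ).im ≠ 0) :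
    ∃ C, ∀ t : Fin n → ℝ,
      ‖∏ ℓ ∈ s, cauchyDiff (ζ ℓ) (t ℓ)‖ ≤ C * ∏ ℓ ∈ s, (1 + t ℓ ^ 2)⁻¹ :=
  ⟨∏ ℓ ∈ s, ‖ζ ℓ + I‖ * (√(1 + 2 * ‖ζ ℓ‖ ^ 2) / |(ζ ℓ).im|), fun t => by
    rw [norm_prod, ← prod_mul_distrib]
    exact prod_le_prod (fun _ _ => norm_nonneg _)
      fun ℓ hℓ => norm_cauchyDiff_le_of_im_ne_zero (hζ ℓ hℓ) _⟩

lemma measurable_prod_cauchyDiff {n : ℕ} (s : Finset (Fin n)) (ζ : Fin n → ℂ) :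
    Measurable fun t : Fin n → ℝ => ∏ ℓ ∈ s, cauchyDiff (ζ ℓ) (t ℓ) := by
  unfold cauchyDiff
  fun_prop

lemma integrable_prod_cauchyDiff {n : ℕ} {μ : Measure (Fin n → ℝ)} (hμ : GrowthCondition n μ)
    {ζ : Fin n → ℂ} (hζ : ζ ∈ polyCutPlane n) :
    Integrable (fun t => ∏ ℓ, cauchyDiff (ζ ℓ) (t ℓ)) μ := by
  obtain ⟨C, hC⟩ := exists_norm_prod_cauchyDiff_le univ fun ℓ _ => hζ ℓ
  exact ((integrable_growthWeight hμ).const_mul C).mono'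
    (measurable_prod_cauchyDiff univ ζ).aestronglyMeasurable (ae_of_all _ hC)

lemma kernelK_eq (n : ℕ) (ζ : Fin n → ℂ) (t : Fin n → ℝ) :
    kernelK n ζ t = I * (2 / (2 * I) ^ n * ∏ ℓ, cauchyDiff (ζ ℓ) (t ℓ) -
      1 / (2 * I) ^ n * ∏ ℓ, cauchyDiff I (t ℓ)) :=
  rfl

lemma integral_kernelK_s14 {n : ℕ} {μ : Measure (Fin n → ℝ)} (hμ : GrowthCondition n μ)
    {ζ : Fin n → ℂ} (hζ : ζ ∈ polyCutPlane n) :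
    ∫ t, kernelK n ζ t ∂μ = I * (2 / (2 * I) ^ n * ∫ t, ∏ ℓ, cauchyDiff (ζ ℓ) (t ℓ) ∂μ -
      1 / (2 * I) ^ n * ∫ t, ∏ ℓ, cauchyDiff I (t ℓ) ∂μ) := by
  have hI : (fun _ => I) ∈ polyCutPlane n := fun _ => by simp
  simp_rw [kernelK_eq]
  rw [integral_const_mul, integral_sub, integral_const_mul, integral_const_mul]
  · exact (integrable_prod_cauchyDiff hμ hζ).const_mul _
  · exact (integrable_prod_cauchyDiff hμ hI).const_mul _

instance (S : Set ℂ) : (stoltzFilter S).IsCountablyGenerated := by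
  unfold stoltzFilter
  infer_instance

lemma stoltzFilter_le_cobounded (S : Set ℂ) : stoltzFilter S ≤ Bornology.cobounded ℂ := by
  rw [stoltzFilter, ← comap_norm_atTop]
  exact inf_le_left

lemma tendsto_inv_stoltzFilter (S : Set ℂ) : Tendsto (·⁻¹) (stoltzFilter S) (𝓝 (0 : ℂ)) :=
  tendsto_inv₀_cobounded.mono_left (stoltzFilter_le_cobounded S)

lemma eventually_mem_stoltzFilter (S : Set ℂ) : ∀ᶠ w in stoltzFilter S, w ∈ S :=
  mem_inf_of_right (mem_principal_self S)

lemma tendsto_cauchyDiff_div_cobounded (t : ℝ) :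
    Tendsto (fun w => cauchyDiff w t / w) (Bornology.cobounded ℂ) (𝓝 0) := by
  have h : Tendsto (fun w : ℂ => ((t : ℂ) - w)⁻¹) (Bornology.cobounded ℂ) (𝓝 0) :=
    tendsto_inv₀_cobounded.comp (tendsto_const_sub_cobounded _)
  simpa [cauchyDiff, div_eq_mul_inv] using (h.sub_const ((t : ℂ) + I)⁻¹).mul tendsto_inv₀_cobounded

lemma tendsto_integral_prod_cauchyDiff_update_div {n : ℕ} {μ : Measure (Fin n → ℝ)}
    (hμ : GrowthCondition n μ) {θ : ℝ} (hθ : 0 < θ) {z : Fin n → ℂ} {j : Fin n}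
    (hz : ∀ k, k ≠ j → (z k).im ≠ 0) :
    Tendsto (fun w => ∫ t, (∏ ℓ, cauchyDiff (Function.update z j w ℓ) (t ℓ)) / w ∂μ)
      (stoltzFilter (upperStoltz θ)) (𝓝 0) := by
  obtain ⟨C, hC⟩ := exists_norm_prod_cauchyDiff_le (univ.erase j) (ζ := z)
    fun ℓ hℓ => hz ℓ (ne_of_mem_erase hℓ)
  have hsplit (w : ℂ) (t : Fin n → ℝ) :
      (∏ ℓ, cauchyDiff (Function.update z j w ℓ) (t ℓ)) / w =
        cauchyDiff w (t j) / w * ∏ ℓ ∈ univ.erase j, cauchyDiff (z ℓ) (t ℓ) := by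
    rw [← mul_prod_erase univ _ (mem_univ j), Function.update_self, mul_div_right_comm]
    congr 1
    exact prod_congr rfl fun ℓ hℓ => by rw [Function.update_of_ne (ne_of_mem_erase hℓ)]
  simp_rw [hsplit]
  rw [← integral_zero (Fin n → ℝ) ℂ]
  refine tendsto_integral_filter_of_dominated_convergence
    (fun t => 2 * (√3 / Real.sin θ) * C * growthWeight n t) ?_ ?_ ?_ ?_
  · refine .of_forall fun w => Measurable.aestronglyMeasurable ?_
    unfold cauchyDiff
    fun_prop
  · filter_upwards [eventually_mem_stoltzFilter _,
      (tendsto_norm_cobounded_atTop.mono_left (stoltzFilter_le_cobounded _)).eventually_ge_atTop 1]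
      with w hw hw1
    refine .of_forall fun t => ?_
    rw [norm_mul, growthWeight, ← mul_prod_erase univ _ (mem_univ j)]
    have hj := norm_cauchyDiff_div_le_of_mem_upperStoltz hθ hw hw1 (t j)
    calc _ ≤ 2 * (√3 / Real.sin θ) * (1 + t j ^ 2)⁻¹ *
          (C * ∏ ℓ ∈ univ.erase j, (1 + t ℓ ^ 2)⁻¹) :=
          mul_le_mul hj (hC t) (norm_nonneg _) ((norm_nonneg _).trans hj)
      _ = _ := by ring
  · exact (integrable_growthWeight hμ).const_mul _
  · refine .of_forall fun t => ?_
    simpa using ((tendsto_cauchyDiff_div_cobounded (t j)).mono_left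
      (stoltzFilter_le_cobounded _)).mul_const (∏ ℓ ∈ univ.erase j, cauchyDiff (z ℓ) (t ℓ))

lemma tendsto_integral_kernelK_update_div {n : ℕ} {μ : Measure (Fin n → ℝ)}
    (hμ : GrowthCondition n μ) {θ : ℝ} (hθ : 0 < θ) {z : Fin n → ℂ} {j : Fin n}
    (hz : ∀ k, k ≠ j → (z k).im ≠ 0) :
    Tendsto (fun w => (∫ t, kernelK n (Function.update z j w) t ∂μ) / w)
      (stoltzFilter (upperStoltz θ)) (𝓝 0) := by
  have hlim := (((tendsto_integral_prod_cauchyDiff_update_div hμ hθ hz).const_mul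
    (2 / (2 * I) ^ n)).sub ((tendsto_inv_stoltzFilter _).const_mul
      (1 / (2 * I) ^ n * ∫ t, ∏ ℓ, cauchyDiff I (t ℓ) ∂μ))).const_mul I
  rw [mul_zero, mul_zero, sub_zero, mul_zero] at hlim
  refine hlim.congr' ?_
  filter_upwards [eventually_mem_stoltzFilter _] with w hw
  have hupd : Function.update z j w ∈ polyCutPlane n :=
    (Function.forall_update_iff z fun _ ζ => ζ.im ≠ 0).2 ⟨hw.1.ne', hz⟩
  rw [integral_kernelK_s14 hμ hupd, integral_div]
  ring

theorem b_parameter_stoltz_limit_general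
    (n : ℕ) (a : ℝ) (b : Fin n → ℝ)
    (μ : Measure (Fin n → ℝ)) (hμg : GrowthCondition n μ)
    (h : (Fin n → ℂ) → ℂ)
    (hh : ∀ z ∈ upperPoly n,
      h z = (a : ℂ) + (∑ ℓ : Fin n, (b ℓ : ℂ) * z ℓ) +
        (1 / (Real.pi : ℂ) ^ n) * ∫ t, kernelK n z t ∂μ)
    (j : Fin n) (θ : ℝ) (hθ1 : 0 < θ)
    (z : Fin n → ℂ) (hz : ∀ k, k ≠ j → 0 < (z k).im) :
    Filter.Tendsto (fun w : ℂ => h (Function.update z j w) / w)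
      (stoltzFilter (upperStoltz θ)) (nhds (b j : ℂ)) := by
  set c : ℂ := a + ∑ ℓ ∈ univ \ {j}, (b ℓ : ℂ) * z ℓ
  have hK := tendsto_integral_kernelK_update_div hμg hθ1 fun k hk => (hz k hk).ne'
  have hlim := (tendsto_const_nhds (x := (b j : ℂ))).add
    (((tendsto_inv_stoltzFilter _).const_mul c).add (hK.const_mul (1 / (Real.pi : ℂ) ^ n)))
  rw [mul_zero, mul_zero, add_zero, add_zero] at hlim
  refine hlim.congr' ?_
  filter_upwards [eventually_mem_stoltzFilter _] with w hw
  have hupd : Function.update z j w ∈ upperPoly n :=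
    (Function.forall_update_iff z fun _ ζ => 0 < ζ.im).2 ⟨hw.1, hz⟩
  have hsum : ∑ ℓ, (b ℓ : ℂ) * Function.update z j w ℓ =
      b j * w + ∑ ℓ ∈ univ \ {j}, (b ℓ : ℂ) * z ℓ := by
    simp_rw [Function.apply_update (fun ℓ ζ => (b ℓ : ℂ) * ζ)]
    rw [sum_update_of_mem (mem_univ j)]
  have hw0 : w ≠ 0 := fun h0 => by simpa [h0] using hw.1
  rw [hh _ hupd, hsum]
  field_simp
  ring

/-- Formula (2.8): the representing parameter `b_j` of a Herglotz-Nevanlinna function is its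
non-tangential growth coefficient along the `j`-th coordinate, independently of the other
entries of `z`. -/
theorem b_parameter_stoltz_limit
    (n : ℕ) (a : ℝ) (b : Fin n → ℝ) (hb : ∀ j, 0 ≤ b j)
    (μ : Measure (Fin n → ℝ)) (hμg : GrowthCondition n μ) (hμN : NevanlinnaCondition n μ)
    (h : (Fin n → ℂ) → ℂ)
    (hh : ∀ z ∈ upperPoly n,
      h z = (a : ℂ) + (∑ ℓ : Fin n, (b ℓ : ℂ) * z ℓ) +
        (1 / (Real.pi : ℂ) ^ n) * ∫ t, kernelK n z t ∂μ)
    (j : Fin n) (θ : ℝ) (hθ1 : 0 < θ) (hθ2 : θ ≤ Real.pi / 2)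
    (z : Fin n → ℂ) (hz : ∀ k, k ≠ j → 0 < (z k).im) :
    Filter.Tendsto (fun w : ℂ => h (Function.update z j w) / w)
      (stoltzFilter (upperStoltz θ)) (nhds (b j : ℂ)) :=
  b_parameter_stoltz_limit_general n a b μ hμg h hh j θ hθ1 z hz
end

section
/- Let μ₂ be the positive Borel measure on ℝ² defined by μ₂(U) := π ∫_ℝ χ_U(t,t) dt for Borel sets U ⊆ ℝ² (i.e. μ₂ is the pushforward of π times Lebesgue measure on ℝ under t ↦ (t,t), a measure supported on the diagonal). Then μ₂ satisfies the growth condition, and for all z₁, z₂ ∈ ℂ with Im z₁ > 0 and Im z₂ > 0, the Cauchy-type function of μ₂ satisfies π^{−2} ∫_{ℝ²} K_2((z₁,z₂),t) dμ₂(t) = −i/2 − 1/(i+z₁) − 1/(i+z₂). In particular, its value at (4i,4i) equals −i/10, so its imaginary part is negative at some point of ℂ^{+2}. -/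
open Complex MeasureTheory Finset Filter Topology

/-- The measure `μ₂` on `ℝ²`: `π` times the pushforward of Lebesgue measure under `t ↦ (t,t)`,
i.e. `μ₂(U) = π ∫_ℝ χ_U(t,t) dt`. -/
noncomputable def muDiag : Measure (Fin 2 → ℝ) :=
  ENNReal.ofReal Real.pi •
    Measure.map (fun t : ℝ => (fun _ : Fin 2 => t)) volume

/-!
On the diagonal the kernel is a rational function of `t`, a combination of products
`(t - a)⁻¹ (t - b)⁻¹` with `a, b ∈ {z₁, z₂, i, -i}`. For `a ≠ b` such a product has the
antiderivative `(log (t - a) - log (t - b)) / (a - b)`; as `t - a` never meets the branch cut,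
`log (t - a) - log t` tends to `0` at `+∞` and to `-π i · sign (Im a)` at `-∞`. Hence the integral
vanishes when `a, b` lie in the same half-plane and equals `2π i / (a - b)` when `Im a > 0 > Im b`.
-/

section CauchyFactor

variable {a b c d : ℂ}

lemma ofReal_sub_ne_zero_of_im_ne_zero (ha : a.im ≠ 0) (t : ℝ) : (t : ℂ) - a ≠ 0 := by
  intro h
  apply ha
  simpa using congrArg Complex.im h

lemma ofReal_sub_mem_slitPlane (ha : a.im ≠ 0) (t : ℝ) : (t : ℂ) - a ∈ slitPlane :=
  mem_slitPlane_iff.2 (Or.inr (by simpa using ha))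

lemma continuous_inv_ofReal_sub (ha : a.im ≠ 0) : Continuous fun t : ℝ => ((t : ℂ) - a)⁻¹ :=
  (continuous_ofReal.sub continuous_const).inv₀ (ofReal_sub_ne_zero_of_im_ne_zero ha)

lemma norm_inv_ofReal_sub_le (ha : a.im ≠ 0) (t : ℝ) :
    ‖((t : ℂ) - a)⁻¹‖ ≤ (1 + (1 + ‖a‖) / |a.im|) * (1 + |t|)⁻¹ := by
  set n := ‖(t : ℂ) - a‖
  have him : |a.im| ≤ n := by simpa using abs_im_le_norm ((t : ℂ) - a)
  have hre : |t| - ‖a‖ ≤ n := by simpa using norm_sub_norm_le (t : ℂ) a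
  have hima : 0 < |a.im| := abs_pos.2 ha
  have hscale : 1 + ‖a‖ ≤ (1 + ‖a‖) / |a.im| * n := by
    rw [div_mul_eq_mul_div, le_div_iff₀ hima]
    exact mul_le_mul_of_nonneg_left him (by positivity)
  rw [norm_inv, ← div_eq_mul_inv, le_div_iff₀ (by positivity), inv_mul_le_iff₀ (hima.trans_le him)]
  linarith

lemma tendsto_inv_ofReal_sub (ha : a.im ≠ 0) {l : Filter ℝ} (hl : Tendsto (fun t => |t|) l atTop) :
    Tendsto (fun t : ℝ => ((t : ℂ) - a)⁻¹) l (𝓝 0) := by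
  have h : Tendsto (fun t : ℝ => (1 + (1 + ‖a‖) / |a.im|) * (1 + |t|)⁻¹) l (𝓝 0) := by
    simpa using (tendsto_inv_atTop_zero.comp (tendsto_atTop_add_const_left _ 1 hl)).const_mul
      (1 + (1 + ‖a‖) / |a.im|)
  exact squeeze_zero_norm (norm_inv_ofReal_sub_le ha) h

lemma integrable_inv_ofReal_sub_mul_inv_ofReal_sub (ha : a.im ≠ 0) (hb : b.im ≠ 0) :
    Integrable fun t : ℝ => ((t : ℂ) - a)⁻¹ * ((t : ℂ) - b)⁻¹ := by
  set C := 1 + (1 + ‖a‖) / |a.im|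
  set D := 1 + (1 + ‖b‖) / |b.im|
  refine (integrable_inv_one_add_sq.const_mul (C * D)).mono'
    ((continuous_inv_ofReal_sub ha).mul (continuous_inv_ofReal_sub hb)).aestronglyMeasurable
    (Eventually.of_forall fun t => ?_)
  have hsq : (1 + |t|)⁻¹ * (1 + |t|)⁻¹ ≤ (1 + t ^ 2)⁻¹ := by
    rw [← mul_inv]
    exact inv_anti₀ (by positivity) (by nlinarith [abs_nonneg t, sq_abs t])
  calc ‖((t : ℂ) - a)⁻¹ * ((t : ℂ) - b)⁻¹‖
      ≤ (C * (1 + |t|)⁻¹) * (D * (1 + |t|)⁻¹) := by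
        rw [norm_mul]
        exact mul_le_mul (norm_inv_ofReal_sub_le ha t) (norm_inv_ofReal_sub_le hb t)
          (norm_nonneg _) (by positivity)
    _ = C * D * ((1 + |t|)⁻¹ * (1 + |t|)⁻¹) := by ring
    _ ≤ C * D * (1 + t ^ 2)⁻¹ := by gcongr

lemma integrable_sub_mul_sub (ha : a.im ≠ 0) (hb : b.im ≠ 0) (hc : c.im ≠ 0) (hd : d.im ≠ 0) :
    Integrable fun t : ℝ =>
      (((t : ℂ) - a)⁻¹ - ((t : ℂ) - c)⁻¹) * (((t : ℂ) - b)⁻¹ - ((t : ℂ) - d)⁻¹) := by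
  simp_rw [sub_mul, mul_sub]
  exact ((integrable_inv_ofReal_sub_mul_inv_ofReal_sub ha hb).sub
    (integrable_inv_ofReal_sub_mul_inv_ofReal_sub ha hd)).sub
    ((integrable_inv_ofReal_sub_mul_inv_ofReal_sub hc hb).sub
    (integrable_inv_ofReal_sub_mul_inv_ofReal_sub hc hd))

lemma hasDerivAt_log_ofReal_sub (ha : a.im ≠ 0) (t : ℝ) :
    HasDerivAt (fun s : ℝ => log ((s : ℂ) - a)) ((t : ℂ) - a)⁻¹ t := by
  simpa using ((hasDerivAt_id t).ofReal_comp.sub_const a).clog_real (ofReal_sub_mem_slitPlane ha t)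

end CauchyFactor

section LogLimits

variable {a : ℂ}

lemma log_ofReal_sub_sub_log (ha : a.im ≠ 0) {t : ℝ} (ht : t ≠ 0) :
    log ((t : ℂ) - a) - Real.log t = log (((t : ℂ) - a) / |t|) := by
  have habs : ((|t| : ℝ) : ℂ) ≠ 0 := ofReal_ne_zero.2 (abs_ne_zero.2 ht)
  have h : (t : ℂ) - a = (|t| : ℝ) * (((t : ℂ) - a) / (|t| : ℝ)) := by field_simp
  conv_lhs => rw [h]
  rw [log_ofReal_mul (abs_pos.2 ht) (div_ne_zero (ofReal_sub_ne_zero_of_im_ne_zero ha t) habs),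
    Real.log_abs, add_sub_cancel_left]

lemma im_ofReal_sub_div_abs (a : ℂ) (t : ℝ) : (((t : ℂ) - a) / |t|).im = -a.im / |t| := by
  simp [div_ofReal_im]

lemma tendsto_ofReal_sub_div_abs_atTop (a : ℂ) :
    Tendsto (fun t : ℝ => ((t : ℂ) - a) / |t|) atTop (𝓝 1) := by
  have h : Tendsto (fun t : ℝ => 1 - a * ((t⁻¹ : ℝ) : ℂ)) atTop (𝓝 1) := by
    simpa using tendsto_const_nhds.sub
      (((continuous_ofReal.tendsto 0).comp tendsto_inv_atTop_zero).const_mul a)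
  refine h.congr' ?_
  filter_upwards [eventually_gt_atTop 0] with t ht
  have ht' : (t : ℂ) ≠ 0 := ofReal_ne_zero.2 ht.ne'
  rw [abs_of_pos ht]
  push_cast
  field_simp

lemma tendsto_ofReal_sub_div_abs_atBot (a : ℂ) :
    Tendsto (fun t : ℝ => ((t : ℂ) - a) / |t|) atBot (𝓝 (-1)) := by
  have h : Tendsto (fun t : ℝ => -1 + a * ((t⁻¹ : ℝ) : ℂ)) atBot (𝓝 (-1)) := by
    simpa using tendsto_const_nhds.add
      (((continuous_ofReal.tendsto 0).comp tendsto_inv_atBot_zero).const_mul a)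
  refine h.congr' ?_
  filter_upwards [eventually_lt_atBot 0] with t ht
  have ht' : (t : ℂ) ≠ 0 := ofReal_ne_zero.2 ht.ne
  rw [abs_of_neg ht]
  push_cast
  field_simp
  ring

lemma tendsto_log_ofReal_sub_sub_log_atTop (ha : a.im ≠ 0) :
    Tendsto (fun t : ℝ => log ((t : ℂ) - a) - Real.log t) atTop (𝓝 0) := by
  have h := ((continuousAt_clog one_mem_slitPlane).tendsto.comp
    (tendsto_ofReal_sub_div_abs_atTop a))
  rw [log_one] at h
  refine h.congr' ?_
  filter_upwards [eventually_gt_atTop 0] with t ht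
  exact (log_ofReal_sub_sub_log ha ht.ne').symm

lemma tendsto_log_ofReal_sub_sub_log_atBot_of_im_pos (ha : 0 < a.im) :
    Tendsto (fun t : ℝ => log ((t : ℂ) - a) - Real.log t) atBot (𝓝 (-(Real.pi * I))) := by
  have hw : Tendsto (fun t : ℝ => ((t : ℂ) - a) / |t|) atBot (𝓝[{z | z.im < 0}] (-1)) := by
    refine tendsto_nhdsWithin_iff.2 ⟨tendsto_ofReal_sub_div_abs_atBot a, ?_⟩
    filter_upwards [eventually_lt_atBot 0] with t ht
    rw [im_ofReal_sub_div_abs]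
    exact div_neg_of_neg_of_pos (neg_neg_of_pos ha) (abs_pos.2 ht.ne)
  have h :=
    (tendsto_log_nhdsWithin_im_neg_of_re_neg_of_im_zero (z := -1) (by simp) (by simp)).comp hw
  simp only [norm_neg, norm_one, Real.log_one, ofReal_zero, zero_sub] at h
  refine h.congr' ?_
  filter_upwards [eventually_lt_atBot 0] with t ht
  exact (log_ofReal_sub_sub_log ha.ne' ht.ne).symm

lemma tendsto_log_ofReal_sub_sub_log_atBot_of_im_neg (ha : a.im < 0) :
    Tendsto (fun t : ℝ => log ((t : ℂ) - a) - Real.log t) atBot (𝓝 (Real.pi * I)) := by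
  have hw : Tendsto (fun t : ℝ => ((t : ℂ) - a) / |t|) atBot (𝓝[{z | 0 ≤ z.im}] (-1)) := by
    refine tendsto_nhdsWithin_iff.2 ⟨tendsto_ofReal_sub_div_abs_atBot a, ?_⟩
    filter_upwards with t
    rw [im_ofReal_sub_div_abs]
    exact div_nonneg (neg_nonneg.2 ha.le) (abs_nonneg t)
  have h :=
    (continuousWithinAt_log_of_re_neg_of_im_zero (z := -1) (by simp) (by simp)).tendsto.comp hw
  rw [log_neg_one] at h
  refine h.congr' ?_
  filter_upwards [eventually_lt_atBot 0] with t ht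
  exact (log_ofReal_sub_sub_log ha.ne ht.ne).symm

end LogLimits

section CauchyIntegrals

variable {a b c d : ℂ}

lemma integral_inv_ofReal_sub_mul_inv_ofReal_sub_of_ne (ha : a.im ≠ 0) (hb : b.im ≠ 0)
    (hab : a ≠ b) {La Lb : ℂ}
    (hLa : Tendsto (fun t : ℝ => log ((t : ℂ) - a) - Real.log t) atBot (𝓝 La))
    (hLb : Tendsto (fun t : ℝ => log ((t : ℂ) - b) - Real.log t) atBot (𝓝 Lb)) :
    ∫ t : ℝ, ((t : ℂ) - a)⁻¹ * ((t : ℂ) - b)⁻¹ = (Lb - La) / (a - b) := by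
  have hab' : a - b ≠ 0 := sub_ne_zero.2 hab
  have hderiv (t : ℝ) : HasDerivAt (fun s : ℝ => (log ((s : ℂ) - a) - log ((s : ℂ) - b)) / (a - b))
      (((t : ℂ) - a)⁻¹ * ((t : ℂ) - b)⁻¹) t := by
    refine (((hasDerivAt_log_ofReal_sub ha t).sub (hasDerivAt_log_ofReal_sub hb t)).div_const
      (a - b)).congr_deriv ?_
    have := ofReal_sub_ne_zero_of_im_ne_zero ha t
    have := ofReal_sub_ne_zero_of_im_ne_zero hb t
    field_simp
    ring
  have hlim {l : Filter ℝ} {A B : ℂ}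
      (hA : Tendsto (fun t : ℝ => log ((t : ℂ) - a) - Real.log t) l (𝓝 A))
      (hB : Tendsto (fun t : ℝ => log ((t : ℂ) - b) - Real.log t) l (𝓝 B)) :
      Tendsto (fun s : ℝ => (log ((s : ℂ) - a) - log ((s : ℂ) - b)) / (a - b)) l
        (𝓝 ((A - B) / (a - b))) :=
    ((hA.sub hB).div_const _).congr fun t => by ring
  rw [integral_of_hasDerivAt_of_tendsto hderiv (integrable_inv_ofReal_sub_mul_inv_ofReal_sub ha hb)
    (hlim hLa hLb) (hlim (tendsto_log_ofReal_sub_sub_log_atTop ha)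
      (tendsto_log_ofReal_sub_sub_log_atTop hb))]
  ring

lemma integral_inv_ofReal_sub_mul_self (ha : a.im ≠ 0) :
    ∫ t : ℝ, ((t : ℂ) - a)⁻¹ * ((t : ℂ) - a)⁻¹ = 0 := by
  have hderiv (t : ℝ) : HasDerivAt (fun s : ℝ => -((s : ℂ) - a)⁻¹)
      (((t : ℂ) - a)⁻¹ * ((t : ℂ) - a)⁻¹) t := by
    refine (((hasDerivAt_id t).ofReal_comp.sub_const a).inv
      (ofReal_sub_ne_zero_of_im_ne_zero ha t)).neg.congr_deriv ?_
    simp only [id, ofReal_one, neg_div, neg_neg, one_div, sq, mul_inv]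
  have hbot := (tendsto_inv_ofReal_sub ha tendsto_abs_atBot_atTop).neg
  have htop := (tendsto_inv_ofReal_sub ha tendsto_abs_atTop_atTop).neg
  rw [neg_zero] at hbot htop
  rw [integral_of_hasDerivAt_of_tendsto hderiv
    (integrable_inv_ofReal_sub_mul_inv_ofReal_sub ha ha) hbot htop, sub_zero]

lemma integral_inv_ofReal_sub_mul_inv_ofReal_sub_of_im_pos_of_im_pos (ha : 0 < a.im)
    (hb : 0 < b.im) : ∫ t : ℝ, ((t : ℂ) - a)⁻¹ * ((t : ℂ) - b)⁻¹ = 0 := by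
  rcases eq_or_ne a b with rfl | hab
  · exact integral_inv_ofReal_sub_mul_self ha.ne'
  · rw [integral_inv_ofReal_sub_mul_inv_ofReal_sub_of_ne ha.ne' hb.ne' hab
      (tendsto_log_ofReal_sub_sub_log_atBot_of_im_pos ha)
      (tendsto_log_ofReal_sub_sub_log_atBot_of_im_pos hb), sub_self, zero_div]

lemma integral_inv_ofReal_sub_mul_inv_ofReal_sub_of_im_pos_of_im_neg (ha : 0 < a.im)
    (hb : b.im < 0) :
    ∫ t : ℝ, ((t : ℂ) - a)⁻¹ * ((t : ℂ) - b)⁻¹ = 2 * Real.pi * I / (a - b) := by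
  have hab : a ≠ b := fun h => (hb.trans ha).ne (congrArg im h).symm
  rw [integral_inv_ofReal_sub_mul_inv_ofReal_sub_of_ne ha.ne' hb.ne hab
    (tendsto_log_ofReal_sub_sub_log_atBot_of_im_pos ha)
    (tendsto_log_ofReal_sub_sub_log_atBot_of_im_neg hb)]
  ring

lemma integral_sub_mul_sub (ha : a.im ≠ 0) (hb : b.im ≠ 0) (hc : c.im ≠ 0) (hd : d.im ≠ 0) :
    ∫ t : ℝ, (((t : ℂ) - a)⁻¹ - ((t : ℂ) - c)⁻¹) * (((t : ℂ) - b)⁻¹ - ((t : ℂ) - d)⁻¹) =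
      (∫ t : ℝ, ((t : ℂ) - a)⁻¹ * ((t : ℂ) - b)⁻¹) - (∫ t : ℝ, ((t : ℂ) - a)⁻¹ * ((t : ℂ) - d)⁻¹)
        - (∫ t : ℝ, ((t : ℂ) - b)⁻¹ * ((t : ℂ) - c)⁻¹)
        + ∫ t : ℝ, ((t : ℂ) - c)⁻¹ * ((t : ℂ) - d)⁻¹ := by
  have hI {x y : ℂ} (hx : x.im ≠ 0) (hy : y.im ≠ 0) :=
    integrable_inv_ofReal_sub_mul_inv_ofReal_sub hx hy
  simp_rw [sub_mul, mul_sub, mul_comm ((_ : ℂ) - c)⁻¹ ((_ : ℂ) - b)⁻¹]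
  rw [integral_sub ?_ ?_, integral_sub (hI ha hb) (hI ha hd), integral_sub (hI hb hc) (hI hc hd)]
  · ring
  · exact (hI ha hb).sub (hI ha hd)
  · exact (hI hb hc).sub (hI hc hd)

end CauchyIntegrals

lemma kernelK_two_const (z₁ z₂ : ℂ) (t : ℝ) :
    kernelK 2 ![z₁, z₂] (fun _ => t) =
      I * (-(1 / 2) * ((((t : ℂ) - z₁)⁻¹ - ((t : ℂ) - -I)⁻¹) *
          (((t : ℂ) - z₂)⁻¹ - ((t : ℂ) - -I)⁻¹)) +
        1 / 4 * ((((t : ℂ) - I)⁻¹ - ((t : ℂ) - -I)⁻¹) * (((t : ℂ) - I)⁻¹ - ((t : ℂ) - -I)⁻¹))) := by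
  have h : (2 * I) ^ 2 = -4 := by rw [mul_pow, I_sq]; norm_num
  simp only [kernelK, Fin.prod_univ_two, Matrix.cons_val_zero, Matrix.cons_val_one,
    sub_neg_eq_add, h]
  ring

lemma integral_kernelK_two_const {z₁ z₂ : ℂ} (h₁ : 0 < z₁.im) (h₂ : 0 < z₂.im) :
    ∫ t : ℝ, kernelK 2 ![z₁, z₂] (fun _ => t) =
      Real.pi * (-I / 2 - (I + z₁)⁻¹ - (I + z₂)⁻¹) := by
  have hI : 0 < I.im := by simp
  have hnegI : (-I).im < 0 := by simp
  simp_rw [kernelK_two_const]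
  rw [integral_const_mul, integral_add, integral_const_mul, integral_const_mul,
    integral_sub_mul_sub h₁.ne' h₂.ne' hnegI.ne hnegI.ne,
    integral_sub_mul_sub hI.ne' hI.ne' hnegI.ne hnegI.ne,
    integral_inv_ofReal_sub_mul_inv_ofReal_sub_of_im_pos_of_im_pos h₁ h₂,
    integral_inv_ofReal_sub_mul_inv_ofReal_sub_of_im_pos_of_im_pos hI hI,
    integral_inv_ofReal_sub_mul_inv_ofReal_sub_of_im_pos_of_im_neg h₁ hnegI,
    integral_inv_ofReal_sub_mul_inv_ofReal_sub_of_im_pos_of_im_neg h₂ hnegI,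
    integral_inv_ofReal_sub_mul_inv_ofReal_sub_of_im_pos_of_im_neg hI hnegI,
    integral_inv_ofReal_sub_mul_self hnegI.ne]
  · have hI_add {z : ℂ} (hz : 0 < z.im) : I + z ≠ 0 := fun h => by
      have := congrArg im h
      simp only [add_im, I_im, zero_im] at this
      linarith
    have h₁' := hI_add h₁
    have h₂' := hI_add h₂
    have h₃ := hI_add hI
    simp only [sub_neg_eq_add, add_comm _ I]
    field_simp
    linear_combination 16 * Real.pi * (z₁ + z₂ + 2 * I) * I_sq
  · exact (integrable_sub_mul_sub h₁.ne' h₂.ne' hnegI.ne hnegI.ne).const_mul _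
  · exact (integrable_sub_mul_sub hI.ne' hI.ne' hnegI.ne hnegI.ne).const_mul _

lemma measurableEmbedding_const_pi (ι : Type*) [Countable ι] [Nonempty ι] :
    MeasurableEmbedding fun t : ℝ => fun _ : ι => t :=
  (Function.LeftInverse.isClosedEmbedding (f := fun x => x (Classical.arbitrary ι))
    (fun _ => rfl) (continuous_apply _) (continuous_pi fun _ => continuous_id)).measurableEmbedding

lemma integral_muDiag (f : (Fin 2 → ℝ) → ℂ) :
    ∫ x, f x ∂muDiag = Real.pi * ∫ t : ℝ, f fun _ => t := by
  rw [muDiag, integral_smul_measure, (measurableEmbedding_const_pi (Fin 2)).integral_map,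
    ENNReal.toReal_ofReal Real.pi_pos.le, real_smul]

lemma growthCondition_muDiag : GrowthCondition 2 muDiag := by
  rw [GrowthCondition, muDiag, lintegral_smul_measure,
    (measurableEmbedding_const_pi (Fin 2)).lintegral_map]
  refine ENNReal.mul_lt_top ENNReal.ofReal_lt_top
    ((lintegral_mono fun t => ?_).trans_lt integrable_inv_one_add_sq.lintegral_lt_top)
  rw [Fin.prod_univ_two]
  exact ENNReal.ofReal_le_ofReal
    (mul_le_of_le_one_left (by positivity) (inv_le_one_of_one_le₀ (by nlinarith [sq_nonneg t])))

lemma cauchyTransform_muDiag {z₁ z₂ : ℂ} (h₁ : 0 < z₁.im) (h₂ : 0 < z₂.im) :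
    (1 / (Real.pi : ℂ) ^ 2) * ∫ t, kernelK 2 ![z₁, z₂] t ∂muDiag =
      -I / 2 - (I + z₁)⁻¹ - (I + z₂)⁻¹ := by
  have hπ : (Real.pi : ℂ) ≠ 0 := ofReal_ne_zero.2 Real.pi_ne_zero
  rw [integral_muDiag, integral_kernelK_two_const h₁ h₂]
  field_simp

/-- Example 3.5, the function `f₂`: the measure `μ₂` supported on the diagonal satisfies the
growth condition, its Cauchy-type function equals `−i/2 − 1/(i+z₁) − 1/(i+z₂)` on `ℂ⁺ × ℂ⁺`,
and its value at `(4i, 4i)` equals `−i/10` (so its imaginary part is negative somewhere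
on `ℂ^{+2}`). -/
theorem diag_measure_cauchy_type_upper :
    GrowthCondition 2 muDiag ∧
    (∀ z₁ z₂ : ℂ, 0 < z₁.im → 0 < z₂.im →
      (1 / (Real.pi : ℂ) ^ 2) * ∫ t, kernelK 2 ![z₁, z₂] t ∂muDiag =
        -Complex.I / 2 - (Complex.I + z₁)⁻¹ - (Complex.I + z₂)⁻¹) ∧
    (1 / (Real.pi : ℂ) ^ 2) * ∫ t, kernelK 2 ![4 * Complex.I, 4 * Complex.I] t ∂muDiag =
      -Complex.I / 10 := by
  refine ⟨growthCondition_muDiag, fun z₁ z₂ h₁ h₂ => cauchyTransform_muDiag h₁ h₂, ?_⟩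
  rw [cauchyTransform_muDiag (by simp) (by simp), show I + 4 * I = 5 * I by ring, mul_inv, inv_I]
  ring
end
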